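/- arXiv:1210.5844 — 11 statements merged into one kernel-verified Lean document; each statement's English description precedes it below -/
import Mathlib

section
/- Let H be a real Hilbert space, equip H × ℝ with the standard product norm, and let φ : H → (-∞,+∞] be proper, lower-semicontinuous and convex with open effective domain. Then for every (y,ζ) ∈ H × ℝ, the metric projection of (y,ζ) onto epi φ equals (p,θ), where p = prox_{½(max{φ−ζ,0})²}(y), i.e. p is the unique minimizer over u ∈ H of ½‖u−y‖² + ½(max{φ(u)−ζ,0})², and θ = max{φ(p), ζ}. -/
open WithLp


set_option maxHeartbeats 1000000 in
/-- **Closed form of the epigraphical projection (Proposition 1 of the paper).**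
`H` is a real Hilbert space, `H × ℝ` carries the standard product norm (distances
written as `√(‖·‖² + (·)²)`), and `φ : H → (-∞,+∞]` is proper, lower-semicontinuous
and convex (convexity expressed via convexity of the epigraph) with open effective
domain.  For every `(y,ζ) ∈ H × ℝ`, the function
`F : u ↦ ½‖u - y‖² + ½ (max{φ(u) - ζ, 0})²` has a unique minimizer `p`, the value
`max{φ(p), ζ}` is a real number `θ`, and `(p, θ)` is the metric projection of
`(y,ζ)` onto `epi φ`. -/
theorem stmt3 {H : Type*} [NormedAddCommGroup H] [InnerProductSpace ℝ H] [CompleteSpace H]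
    (φ : H → EReal)
    (hproper : ∃ u, φ u ≠ ⊤)
    (hnebot : ∀ u, φ u ≠ ⊥)
    (hlsc : LowerSemicontinuous φ)
    (hconv : Convex ℝ {q : H × ℝ | φ q.1 ≤ (q.2 : EReal)})
    (hopen : IsOpen {u : H | φ u ≠ ⊤}) :
    ∀ (y : H) (ζ : ℝ),
      ∃ p : H,
        (∀ u : H,
            ((‖p - y‖ ^ 2 / 2 : ℝ) : EReal) +
                ((2⁻¹ : ℝ) : EReal) * (max (φ p - (ζ : EReal)) 0 * max (φ p - (ζ : EReal)) 0) ≤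
              ((‖u - y‖ ^ 2 / 2 : ℝ) : EReal) +
                ((2⁻¹ : ℝ) : EReal) * (max (φ u - (ζ : EReal)) 0 * max (φ u - (ζ : EReal)) 0)) ∧
        (∀ p' : H,
            (∀ u : H,
              ((‖p' - y‖ ^ 2 / 2 : ℝ) : EReal) +
                  ((2⁻¹ : ℝ) : EReal) * (max (φ p' - (ζ : EReal)) 0 * max (φ p' - (ζ : EReal)) 0) ≤
                ((‖u - y‖ ^ 2 / 2 : ℝ) : EReal) +
                  ((2⁻¹ : ℝ) : EReal) * (max (φ u - (ζ : EReal)) 0 * max (φ u - (ζ : EReal)) 0)) →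
            p' = p) ∧
        ∃ θ : ℝ, ((θ : ℝ) : EReal) = max (φ p) (ζ : EReal) ∧
          -- `(p, θ)` is the metric projection of `(y, ζ)` onto `epi φ`
          φ p ≤ ((θ : ℝ) : EReal) ∧
          ∀ (u : H) (ξ : ℝ), φ u ≤ (ξ : EReal) →
            Real.sqrt (‖p - y‖ ^ 2 + (θ - ζ) ^ 2) ≤ Real.sqrt (‖u - y‖ ^ 2 + (ξ - ζ) ^ 2) := by
  intro y ζ
  classical
  set G : H → EReal := fun u =>
    ((‖u - y‖ ^ 2 / 2 : ℝ) : EReal) +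
      ((2⁻¹ : ℝ) : EReal) * (max (φ u - (ζ : EReal)) 0 * max (φ u - (ζ : EReal)) 0) with hG
  -- the epigraph in `H × ℝ`
  set S : Set (H × ℝ) := {q : H × ℝ | φ q.1 ≤ (q.2 : EReal)} with hS
  have hSclosed : IsClosed S := by
    have h1 : IsClosed {p : H × EReal | φ p.1 ≤ p.2} := hlsc.isClosed_epigraph
    have h2 : Continuous (fun q : H × ℝ => (q.1, (q.2 : EReal))) :=
      continuous_fst.prodMk (continuous_coe_real_ereal.comp continuous_snd)
    exact h1.preimage h2
  -- move to the `L²` product space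
  set e := WithLp.equiv 2 (H × ℝ) with he
  set K : Set (WithLp 2 (H × ℝ)) := (⇑e) ⁻¹' S with hK
  have hKclosed : IsClosed K := hSclosed.preimage (WithLp.prod_continuous_ofLp _ _ _)
  have hKconv : Convex ℝ K := by
    have := hconv.linear_preimage (WithLp.linearEquiv 2 ℝ (H × ℝ) : WithLp 2 (H × ℝ) →ₗ[ℝ] H × ℝ)
    exact this
  obtain ⟨u0, hu0⟩ := hproper
  have hu0' : φ u0 = ((φ u0).toReal : EReal) := (EReal.coe_toReal hu0 (hnebot u0)).symm
  have hKne : K.Nonempty := by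
    refine ⟨e.symm (u0, (φ u0).toReal), ?_⟩
    simp only [hK, Set.mem_preimage, Equiv.apply_symm_apply, hS, Set.mem_setOf_eq]
    exact le_of_eq hu0'
  set x : WithLp 2 (H × ℝ) := e.symm (y, ζ) with hx
  obtain ⟨v, hvK, hv⟩ :=
    exists_norm_eq_iInf_of_complete_convex hKne hKclosed.isComplete hKconv x
  have hvmin : ∀ w ∈ K, ‖x - v‖ ≤ ‖x - w‖ := by
    intro w hw
    rw [hv]
    exact ciInf_le ⟨0, Set.forall_mem_range.2 fun _ => norm_nonneg _⟩ (⟨w, hw⟩ : K)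
  -- norm formula
  have hnorm : ∀ (a c : H) (b d : ℝ),
      ‖e.symm (a, b) - e.symm (c, d)‖ = Real.sqrt (‖a - c‖ ^ 2 + (b - d) ^ 2) := by
    intro a c b d
    have : e.symm (a, b) - e.symm (c, d) = e.symm (a - c, b - d) := rfl
    rw [this, WithLp.prod_norm_eq_of_L2]
    have h1 : ((e.symm (a - c, b - d)).fst : H) = a - c := rfl
    have h2 : ((e.symm (a - c, b - d)).snd : ℝ) = b - d := rfl
    rw [h1, h2, Real.norm_eq_abs, sq_abs]
  -- the projection point components
  set p : H := (e v).1 with hp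
  set θ : ℝ := (e v).2 with hθdef
  have hvsymm : v = e.symm (p, θ) := by
    apply e.injective; simp [hp, hθdef]
  have hvK' : φ p ≤ (θ : EReal) := hvK
  have hpt : φ p ≠ ⊤ := fun h => by simp [h] at hvK'
  set r : ℝ := (φ p).toReal with hrdef
  have hr : φ p = (r : EReal) := (EReal.coe_toReal hpt (hnebot p)).symm
  have hrθ : r ≤ θ := by rwa [hr, EReal.coe_le_coe_iff] at hvK'
  -- membership lemma
  have hmem : ∀ (u : H) (ξ : ℝ), φ u ≤ (ξ : EReal) → e.symm (u, ξ) ∈ K := by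
    intro u ξ h
    simp only [hK, Set.mem_preimage, Equiv.apply_symm_apply, hS, Set.mem_setOf_eq]
    exact h
  have hvmin' : ∀ (u : H) (ξ : ℝ), φ u ≤ (ξ : EReal) →
      Real.sqrt (‖p - y‖ ^ 2 + (θ - ζ) ^ 2) ≤ Real.sqrt (‖u - y‖ ^ 2 + (ξ - ζ) ^ 2) := by
    intro u ξ h
    have h0 := hvmin _ (hmem u ξ h)
    rw [hvsymm, hnorm, hnorm] at h0
    rw [show ‖p - y‖ = ‖y - p‖ from norm_sub_rev _ _, show (θ - ζ) ^ 2 = (ζ - θ) ^ 2 by ring,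
      show ‖u - y‖ = ‖y - u‖ from norm_sub_rev _ _, show (ξ - ζ) ^ 2 = (ζ - ξ) ^ 2 by ring]
    exact h0
  -- θ is the max
  have hθmax : θ = max r ζ := by
    have hm : φ p ≤ ((max r ζ : ℝ) : EReal) := by
      rw [hr, EReal.coe_le_coe_iff]; exact le_max_left _ _
    have h1 := hvmin' p (max r ζ) hm
    have h2 : (θ - ζ) ^ 2 ≤ (max r ζ - ζ) ^ 2 := by
      have := (Real.sqrt_le_sqrt_iff (by positivity)).1 h1
      linarith
    rcases le_total r ζ with hc | hc
    · rw [max_eq_right hc] at h2 ⊢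
      nlinarith
    · rw [max_eq_left hc] at h2 ⊢
      have h3 : ζ ≤ θ := le_trans hc hrθ
      nlinarith
  have hθζ : θ - ζ = max (r - ζ) 0 := by
    rw [hθmax, ← max_sub_sub_right, sub_self]
  -- G on finite values
  have hGcoe : ∀ (u : H) (s : ℝ), φ u = (s : EReal) →
      G u = ((‖u - y‖ ^ 2 / 2 + (max (s - ζ) 0) ^ 2 / 2 : ℝ) : EReal) := by
    intro u s h
    rw [hG]
    simp only [h, ← EReal.coe_sub]
    have hmx : max ((s - ζ : ℝ) : EReal) 0 = ((max (s - ζ) 0 : ℝ) : EReal) := by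
      rw [← EReal.coe_zero, (EReal.coe_strictMono.monotone.map_max).symm]
    rw [hmx, ← EReal.coe_mul, ← EReal.coe_mul, ← EReal.coe_add, EReal.coe_eq_coe_iff]
    ring
  have hGtop : ∀ u : H, φ u = ⊤ → G u = ⊤ := by
    intro u h
    rw [hG]
    simp only [h, EReal.top_sub_coe]
    rw [max_eq_left le_top, EReal.top_mul_top, EReal.coe_mul_top_of_pos (by norm_num),
      EReal.coe_add_top]
  have hGp : G p = ((‖p - y‖ ^ 2 / 2 + (θ - ζ) ^ 2 / 2 : ℝ) : EReal) := by
    rw [hGcoe p r hr, hθζ]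
  -- minimality of G at p
  have hGmin : ∀ u : H, G p ≤ G u := by
    intro u
    by_cases hu : φ u = ⊤
    · rw [hGtop u hu]; exact le_top
    · have hus : φ u = (((φ u).toReal : ℝ) : EReal) := (EReal.coe_toReal hu (hnebot u)).symm
      set s : ℝ := (φ u).toReal
      rw [hGp, hGcoe u s hus, EReal.coe_le_coe_iff]
      have hm : φ u ≤ ((max s ζ : ℝ) : EReal) := by
        rw [hus, EReal.coe_le_coe_iff]; exact le_max_left _ _
      have h1 := hvmin' u (max s ζ) hm
      have h2 := (Real.sqrt_le_sqrt_iff (by positivity)).1 h1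
      have h3 : max s ζ - ζ = max (s - ζ) 0 := by rw [← max_sub_sub_right, sub_self]
      rw [h3] at h2
      linarith
  refine ⟨p, hGmin, ?_, θ, ?_, hvK', hvmin'⟩
  · -- uniqueness
    intro p' hp'
    have h1 : G p' = G p := le_antisymm (hp' p) (hGmin p')
    have hpt' : φ p' ≠ ⊤ := by
      intro h
      rw [hGtop p' h, hGp] at h1
      exact (EReal.coe_ne_top _) h1.symm
    have hs' : φ p' = (((φ p').toReal : ℝ) : EReal) := (EReal.coe_toReal hpt' (hnebot p')).symm
    set s' : ℝ := (φ p').toReal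
    rw [hGcoe p' s' hs', hGp, EReal.coe_eq_coe_iff] at h1
    set θ' : ℝ := max s' ζ with hθ'
    have hm' : φ p' ≤ ((θ' : ℝ) : EReal) := by
      rw [hs', EReal.coe_le_coe_iff]; exact le_max_left _ _
    set w : WithLp 2 (H × ℝ) := e.symm (p', θ') with hw
    have hwK : w ∈ K := hmem p' θ' hm'
    have hθ'ζ : θ' - ζ = max (s' - ζ) 0 := by rw [hθ', ← max_sub_sub_right, sub_self]
    have hnw : ‖x - w‖ = ‖x - v‖ := by
      rw [hvsymm, hw, hnorm, hnorm]
      congr 1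
      rw [show ‖y - p'‖ = ‖p' - y‖ from norm_sub_rev _ _,
        show ‖y - p‖ = ‖p - y‖ from norm_sub_rev _ _,
        show (ζ - θ') ^ 2 = (θ' - ζ) ^ 2 by ring, show (ζ - θ) ^ 2 = (θ - ζ) ^ 2 by ring, hθ'ζ]
      linarith
    -- midpoint argument
    set m : WithLp 2 (H × ℝ) := (2⁻¹ : ℝ) • v + (2⁻¹ : ℝ) • w with hm
    have hmK : m ∈ K := hKconv hvK hwK (by norm_num) (by norm_num) (by norm_num)
    have hdm := hvmin m hmK
    have hpar := parallelogram_law_with_norm ℝ (x - v) (x - w)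
    have hsum : x - v + (x - w) = (2 : ℝ) • (x - m) := by
      rw [hm]; module
    have hdiff : x - v - (x - w) = w - v := by abel
    rw [hsum, hdiff, norm_smul] at hpar
    have h2 : ‖(2 : ℝ)‖ = 2 := by norm_num
    rw [h2, hnw] at hpar
    have hwv : w = v := by
      have h0 : ‖w - v‖ ^ 2 ≤ 0 := by nlinarith [norm_nonneg (w - v), norm_nonneg (x - m), norm_nonneg (x - v)]
      have : ‖w - v‖ = 0 := by nlinarith [norm_nonneg (w - v)]
      rw [← sub_eq_zero]
      exact norm_eq_zero.1 this
    have : (p', θ') = (p, θ) := by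
      have := congrArg (⇑e) hwv
      rw [hw, hvsymm] at this
      simpa using this
    exact (Prod.ext_iff.1 this).1
  · -- θ is the max in EReal
    rw [hr, hθmax, ← EReal.coe_strictMono.monotone.map_max]
end

section
/- Let τ > 0 and ζ ≤ 0, and define ψ : ℝ → ℝ by ψ(u) = ½(max{τ|u| − ζ, 0})² = ½(τ|u| − ζ)². Then for every y ∈ ℝ, the unique minimizer over u ∈ ℝ of ½(u−y)² + ψ(u) is prox_ψ(y) = (sign(y)/(1+τ²)) · max{|y| + τζ, 0}. -/
/-- **Prox of `ψ = ½(max{τ|·| − ζ, 0})²` for `ζ ≤ 0` (case `β = 1`).**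
For `τ > 0` and `ζ ≤ 0` one has `ψ(u) = ½(τ|u| − ζ)²`, and for every `y ∈ ℝ` the
point `p = (sign y)/(1 + τ²) · max{|y| + τζ, 0}` is the unique minimizer over
`u ∈ ℝ` of `½(u − y)² + ψ(u)`, i.e. `p = prox_ψ(y)`. -/
theorem stmt6 (τ ζ : ℝ) (hτ : 0 < τ) (hζ : ζ ≤ 0)
    (ψ : ℝ → ℝ) (hψ : ∀ u, ψ u = (max (τ * |u| - ζ) 0) ^ 2 / 2) (y : ℝ) :
    (∀ u, ψ u = (τ * |u| - ζ) ^ 2 / 2) ∧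
    (∀ u : ℝ,
        (Real.sign y / (1 + τ ^ 2) * max (|y| + τ * ζ) 0 - y) ^ 2 / 2 +
            ψ (Real.sign y / (1 + τ ^ 2) * max (|y| + τ * ζ) 0) ≤
          (u - y) ^ 2 / 2 + ψ u) ∧
    (∀ q : ℝ, (∀ u : ℝ, (q - y) ^ 2 / 2 + ψ q ≤ (u - y) ^ 2 / 2 + ψ u) →
      q = Real.sign y / (1 + τ ^ 2) * max (|y| + τ * ζ) 0) := by
  have hψ' : ∀ u, ψ u = (τ * |u| - ζ) ^ 2 / 2 := by
    intro u
    rw [hψ u, max_eq_left]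
    nlinarith [abs_nonneg u, mul_nonneg hτ.le (abs_nonneg u)]
  set p : ℝ := Real.sign y / (1 + τ ^ 2) * max (|y| + τ * ζ) 0 with hpdef
  have ha : (0:ℝ) < 1 + τ ^ 2 := by positivity
  have hlam : (0:ℝ) ≤ -(τ * ζ) := by nlinarith
  have key : ∀ u : ℝ, 0 ≤ (-(τ*ζ))*|u| - (-(τ*ζ))*|p| + ((1+τ^2)*p - y)*(u-p) := by
    rcases lt_trichotomy y 0 with hy | hy | hy
    · rcases le_or_gt (|y| + τ * ζ) 0 with hm | hm
      · have hp0 : p = 0 := by rw [hpdef, max_eq_right hm, mul_zero]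
        intro u
        rw [hp0]
        simp only [abs_zero]
        have hy' : |y| = -y := abs_of_neg hy
        rw [hy'] at hm
        nlinarith [mul_nonneg (by linarith : (0:ℝ) ≤ -(τ*ζ) + y) (abs_nonneg u),
          mul_nonneg (by linarith : (0:ℝ) ≤ -y) (by linarith [neg_abs_le u] : (0:ℝ) ≤ |u| + u)]
      · have hp : p = (y - τ*ζ) / (1 + τ^2) := by
          rw [hpdef, Real.sign_of_neg hy, max_eq_left hm.le, abs_of_neg hy]; ring
        have hy' : |y| = -y := abs_of_neg hy
        rw [hy'] at hm
        have hpneg : p ≤ 0 := by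
          rw [hp]; apply div_nonpos_of_nonpos_of_nonneg <;> linarith
        have hpa : |p| = -p := abs_of_nonpos hpneg
        have hap : (1+τ^2)*p - y = -(τ*ζ) := by
          rw [hp]; field_simp; ring
        intro u
        rw [hpa, hap]
        have h1 : (0:ℝ) ≤ (-(τ*ζ)) * (|u| + u) :=
          mul_nonneg hlam (by linarith [neg_abs_le u])
        nlinarith [h1]
    · intro u
      have hp0 : p = 0 := by rw [hpdef, hy, Real.sign_zero, zero_div, zero_mul]
      rw [hp0, hy]
      simp only [abs_zero]
      nlinarith [mul_nonneg hlam (abs_nonneg u)]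
    · rcases le_or_gt (|y| + τ * ζ) 0 with hm | hm
      · have hp0 : p = 0 := by rw [hpdef, max_eq_right hm, mul_zero]
        intro u
        rw [hp0]
        simp only [abs_zero]
        have hy' : |y| = y := abs_of_pos hy
        rw [hy'] at hm
        nlinarith [mul_nonneg (by linarith : (0:ℝ) ≤ -(τ*ζ) - y) (abs_nonneg u),
          mul_nonneg (by linarith : (0:ℝ) ≤ y) (by linarith [le_abs_self u] : (0:ℝ) ≤ |u| - u)]
      · have hp : p = (y + τ*ζ) / (1 + τ^2) := by
          rw [hpdef, Real.sign_of_pos hy, max_eq_left hm.le, abs_of_pos hy]; ring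
        have hy' : |y| = y := abs_of_pos hy
        rw [hy'] at hm
        have hppos : 0 ≤ p := by
          rw [hp]; apply div_nonneg <;> linarith
        have hpa : |p| = p := abs_of_nonneg hppos
        have hap : (1+τ^2)*p - y = τ*ζ := by
          rw [hp]; field_simp; ring
        intro u
        rw [hpa, hap]
        have h1 : (0:ℝ) ≤ (-(τ*ζ)) * (|u| - u) :=
          mul_nonneg hlam (by linarith [le_abs_self u])
        nlinarith [h1]
  have core : ∀ u : ℝ, (p - y)^2/2 + (τ*|p| - ζ)^2/2 + (1+τ^2)*(u-p)^2/2
      ≤ (u - y)^2/2 + (τ*|u| - ζ)^2/2 := by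
    intro u
    nlinarith [key u, sq_abs u, sq_abs p]
  refine ⟨hψ', ?_, ?_⟩
  · intro u
    rw [hψ' u, hψ' p]
    have h := core u
    nlinarith [mul_nonneg ha.le (sq_nonneg (u - p))]
  · intro q hq
    have h1 := core q
    have h2 := hq p
    rw [hψ' q, hψ' p] at h2
    have hsq : (q - p)^2 = 0 := by nlinarith [sq_nonneg (q - p)]
    have : q - p = 0 := by
      exact pow_eq_zero_iff (n := 2) (by norm_num) |>.mp hsq
    linarith
end

section
/- Let τ > 0, β > 1 and ζ ≤ 0, and define ψ : ℝ → ℝ by ψ(u) = ½(max{τ|u|^β − ζ, 0})² = ½(τ|u|^β − ζ)². Then for every y ∈ ℝ, the equation βτ²χ^{2β−1} − βτζ χ^{β−1} + χ = |y| has a unique solution χ₀ in [0,+∞), and the unique minimizer over u ∈ ℝ of ½(u−y)² + ψ(u) is prox_ψ(y) = sign(y) · χ₀. -/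
open Real Set in
lemma stmt7_aux (τ β ζ : ℝ) (hτ : 0 < τ) (hβ : 1 < β) (hζ : ζ ≤ 0) (Y : ℝ) (hY : 0 ≤ Y) :
    ∃ χ₀ : ℝ, 0 ≤ χ₀ ∧
      β * τ ^ 2 * χ₀ ^ (2 * β - 1) - β * τ * ζ * χ₀ ^ (β - 1) + χ₀ = Y ∧
      (∀ χ : ℝ, 0 ≤ χ →
        β * τ ^ 2 * χ ^ (2 * β - 1) - β * τ * ζ * χ ^ (β - 1) + χ = Y → χ = χ₀) ∧
      (∀ t : ℝ, 0 ≤ t → t ≠ χ₀ →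
        (χ₀ - Y) ^ 2 / 2 + (τ * χ₀ ^ β - ζ) ^ 2 / 2 < (t - Y) ^ 2 / 2 + (τ * t ^ β - ζ) ^ 2 / 2) := by
  set F : ℝ → ℝ := fun χ => β * τ ^ 2 * χ ^ (2 * β - 1) - β * τ * ζ * χ ^ (β - 1) + χ with hF
  set h : ℝ → ℝ := fun t => (t - Y) ^ 2 / 2 + (τ * t ^ β - ζ) ^ 2 / 2 with hh
  have hb1 : (0:ℝ) < 2 * β - 1 := by linarith
  have hb2 : (0:ℝ) < β - 1 := by linarith
  -- strict monotonicity of F on [0,∞)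
  have Fmono : ∀ s t : ℝ, 0 ≤ s → s < t → F s < F t := by
    intro s t hs hst
    have h1 : s ^ (2*β-1) < t ^ (2*β-1) := Real.rpow_lt_rpow hs hst hb1
    have h2 : s ^ (β-1) ≤ t ^ (β-1) := Real.rpow_le_rpow hs hst.le hb2.le
    have hc1 : (0:ℝ) < β * τ ^ 2 := by positivity
    have hc2 : (0:ℝ) ≤ -(β * τ * ζ) := by nlinarith
    simp only [hF]
    nlinarith [mul_lt_mul_of_pos_left h1 hc1, mul_le_mul_of_nonneg_left h2 hc2]
  -- continuity of F
  have Fcont : ContinuousOn F (Icc 0 Y) := by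
    intro x _
    have c1 := Real.continuousAt_rpow_const x (2*β-1) (Or.inr hb1.le)
    have c2 := Real.continuousAt_rpow_const x (β-1) (Or.inr hb2.le)
    exact (((continuousAt_const.mul c1).sub (continuousAt_const.mul c2)).add continuousAt_id).continuousWithinAt
  have F0 : F 0 = 0 := by
    simp [hF, Real.zero_rpow hb1.ne', Real.zero_rpow hb2.ne']
  have FY : Y ≤ F Y := by
    have e1 : (0:ℝ) ≤ β * τ ^ 2 * Y ^ (2*β-1) := by positivity
    have e2 : (0:ℝ) ≤ -(β * τ * ζ) * Y ^ (β-1) :=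
      mul_nonneg (by nlinarith [mul_nonneg (mul_pos (zero_lt_one.trans hβ) hτ).le (neg_nonneg.2 hζ)]) (Real.rpow_nonneg hY _)
    simp only [hF]
    nlinarith
  have hYmem : Y ∈ Icc (F 0) (F Y) := ⟨by rw [F0]; exact hY, FY⟩
  obtain ⟨χ₀, hmem, hFχ⟩ := intermediate_value_Icc hY Fcont hYmem
  have hχ₀ : 0 ≤ χ₀ := hmem.1
  have huniq : ∀ χ : ℝ, 0 ≤ χ → F χ = Y → χ = χ₀ := by
    intro χ hχ hFc
    rcases lt_trichotomy χ χ₀ with hlt | heq | hgt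
    · exact absurd (hFc.trans hFχ.symm) (Fmono χ χ₀ hχ hlt).ne
    · exact heq
    · exact absurd (hFχ.trans hFc.symm) (Fmono χ₀ χ hχ₀ hgt).ne
  -- derivative of h
  have hd : ∀ t : ℝ, 0 ≤ t → HasDerivAt h (F t - Y) t := by
    intro t ht
    have hr : HasDerivAt (fun x : ℝ => x ^ β) (β * t ^ (β-1)) t :=
      Real.hasDerivAt_rpow_const (Or.inr hβ.le)
    have h1 : HasDerivAt (fun x : ℝ => (x - Y) ^ 2 / 2) ((↑2 * (t - Y) ^ (2-1) * 1) / 2) t :=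
      (((hasDerivAt_id t).sub_const Y).pow 2).div_const 2
    have h2 : HasDerivAt (fun x : ℝ => (τ * x ^ β - ζ) ^ 2 / 2)
        ((↑2 * (τ * t ^ β - ζ) ^ (2-1) * (τ * (β * t ^ (β-1)))) / 2) t :=
      (((hr.const_mul τ).sub_const ζ).pow 2).div_const 2
    have hmul : t ^ β * t ^ (β-1) = t ^ (2*β-1) := by
      rw [← Real.rpow_add' ht (by intro hc; nlinarith : β + (β-1) ≠ 0)]
      congr 1; ring
    have := h1.add h2
    convert this using 1
    · rfl
    · rfl
    · rfl
    simp only [hF]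
    push_cast
    linear_combination (-(τ^2 * β)) * hmul
  -- strict minimum of h at χ₀ on [0,∞)
  refine ⟨χ₀, hχ₀, hFχ, huniq, ?_⟩
  intro t ht hne
  have hcont : ∀ s ∈ Icc (0:ℝ) (max t χ₀), ContinuousWithinAt h (Icc 0 (max t χ₀)) s :=
    fun s hs => ((hd s hs.1).continuousAt).continuousWithinAt
  rcases lt_or_gt_of_ne hne with hlt | hgt
  · -- t < χ₀ : h strictly decreasing on [0, χ₀]
    have hanti : StrictAntiOn h (Icc 0 χ₀) := by
      apply strictAntiOn_of_deriv_neg (convex_Icc 0 χ₀)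
      · exact fun s hs => ((hd s hs.1).continuousAt).continuousWithinAt
      · intro x hx
        rw [interior_Icc] at hx
        rw [(hd x hx.1.le).deriv]
        have := Fmono x χ₀ hx.1.le hx.2
        linarith [hFχ ▸ this]
    exact hanti ⟨ht, hlt.le⟩ ⟨hχ₀, le_refl _⟩ hlt
  · -- χ₀ < t : h strictly increasing on [χ₀, t]
    have hmono : StrictMonoOn h (Icc χ₀ t) := by
      apply strictMonoOn_of_deriv_pos (convex_Icc χ₀ t)
      · exact fun s hs => ((hd s (hχ₀.trans hs.1)).continuousAt).continuousWithinAt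
      · intro x hx
        rw [interior_Icc] at hx
        rw [(hd x (hχ₀.trans hx.1.le)).deriv]
        have := Fmono χ₀ x hχ₀ hx.1
        linarith [hFχ ▸ this]
    exact hmono ⟨le_refl _, hgt.le⟩ ⟨hgt.le, le_refl _⟩ hgt

/-- **Prox of `ψ = ½(max{τ|·|^β − ζ, 0})²` for `β > 1` and `ζ ≤ 0`.**
For `τ > 0`, `β > 1`, `ζ ≤ 0` one has `ψ(u) = ½(τ|u|^β − ζ)²`, and for every
`y ∈ ℝ` the equation `βτ²χ^{2β−1} − βτζ χ^{β−1} + χ = |y|` has a unique solution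
`χ₀` in `[0, +∞)`, and `sign y · χ₀` is the unique minimizer over `u ∈ ℝ` of
`½(u − y)² + ψ(u)`, i.e. `prox_ψ(y) = sign y · χ₀`. -/
theorem stmt7 (τ β ζ : ℝ) (hτ : 0 < τ) (hβ : 1 < β) (hζ : ζ ≤ 0)
    (ψ : ℝ → ℝ) (hψ : ∀ u, ψ u = (max (τ * |u| ^ β - ζ) 0) ^ 2 / 2) (y : ℝ) :
    (∀ u, ψ u = (τ * |u| ^ β - ζ) ^ 2 / 2) ∧
    ∃ χ₀ : ℝ, 0 ≤ χ₀ ∧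
      β * τ ^ 2 * χ₀ ^ (2 * β - 1) - β * τ * ζ * χ₀ ^ (β - 1) + χ₀ = |y| ∧
      (∀ χ : ℝ, 0 ≤ χ →
        β * τ ^ 2 * χ ^ (2 * β - 1) - β * τ * ζ * χ ^ (β - 1) + χ = |y| → χ = χ₀) ∧
      (∀ u : ℝ,
        (Real.sign y * χ₀ - y) ^ 2 / 2 + ψ (Real.sign y * χ₀) ≤ (u - y) ^ 2 / 2 + ψ u) ∧
      (∀ q : ℝ, (∀ u : ℝ, (q - y) ^ 2 / 2 + ψ q ≤ (u - y) ^ 2 / 2 + ψ u) →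
        q = Real.sign y * χ₀) := by
  have hψ' : ∀ u, ψ u = (τ * |u| ^ β - ζ) ^ 2 / 2 := by
    intro u
    rw [hψ u, max_eq_left]
    nlinarith [mul_nonneg hτ.le (Real.rpow_nonneg (abs_nonneg u) β)]
  obtain ⟨χ₀, hχ₀, hFχ, huniq, hmin⟩ := stmt7_aux τ β ζ hτ hβ hζ |y| (abs_nonneg y)
  have hy0 : y = 0 → χ₀ = 0 := by
    intro hy
    have e1 : (0:ℝ) ≤ β * τ ^ 2 * χ₀ ^ (2*β-1) := by positivity
    have e2 : (0:ℝ) ≤ -(β * τ * ζ) * χ₀ ^ (β-1) :=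
      mul_nonneg (by nlinarith [mul_nonneg (mul_pos (zero_lt_one.trans hβ) hτ).le (neg_nonneg.2 hζ)])
        (Real.rpow_nonneg hχ₀ _)
    rw [hy, abs_zero] at hFχ
    nlinarith
  set p := Real.sign y * χ₀ with hp
  have hp_abs : |p| = χ₀ := by
    rcases lt_trichotomy y 0 with hy|hy|hy
    · rw [hp, Real.sign_of_neg hy]; rw [show (-1 : ℝ) * χ₀ = -χ₀ by ring, abs_neg,
        abs_of_nonneg hχ₀]
    · simp [hp, hy, hy0 hy]
    · rw [hp, Real.sign_of_pos hy, one_mul, abs_of_nonneg hχ₀]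
  have hp_mul : p * y = χ₀ * |y| := by
    rcases lt_trichotomy y 0 with hy|hy|hy
    · rw [hp, Real.sign_of_neg hy, abs_of_neg hy]; ring
    · simp [hp, hy]
    · rw [hp, Real.sign_of_pos hy, abs_of_pos hy]; ring
  have key : ∀ u : ℝ, (|u| - |y|) ^ 2 / 2 + (τ * |u| ^ β - ζ) ^ 2 / 2
      ≤ (u - y) ^ 2 / 2 + ψ u := by
    intro u
    rw [hψ' u]
    nlinarith [le_abs_self (u*y), abs_mul u y, sq_abs u, sq_abs y]
  have hpe : (p - y) ^ 2 / 2 + ψ p = (χ₀ - |y|) ^ 2 / 2 + (τ * χ₀ ^ β - ζ) ^ 2 / 2 := by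
    have h1 : p ^ 2 = χ₀ ^ 2 := by rw [← sq_abs p, hp_abs]
    have h3 : y ^ 2 = |y| ^ 2 := (sq_abs y).symm
    rw [hψ' p, hp_abs]
    linear_combination h1 / 2 - hp_mul + h3 / 2
  have hle : ∀ t : ℝ, 0 ≤ t →
      (χ₀ - |y|) ^ 2 / 2 + (τ * χ₀ ^ β - ζ) ^ 2 / 2
      ≤ (t - |y|) ^ 2 / 2 + (τ * t ^ β - ζ) ^ 2 / 2 := by
    intro t ht
    by_cases hne : t = χ₀
    · rw [hne]
    · exact (hmin t ht hne).le
  refine ⟨hψ', χ₀, hχ₀, hFχ, huniq, ?_, ?_⟩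
  · intro u
    calc (p - y) ^ 2 / 2 + ψ p = (χ₀ - |y|) ^ 2 / 2 + (τ * χ₀ ^ β - ζ) ^ 2 / 2 := hpe
      _ ≤ (|u| - |y|) ^ 2 / 2 + (τ * |u| ^ β - ζ) ^ 2 / 2 := hle |u| (abs_nonneg u)
      _ ≤ (u - y) ^ 2 / 2 + ψ u := key u
  · intro q hq
    have h1 : (q - y) ^ 2 / 2 + ψ q ≤ (χ₀ - |y|) ^ 2 / 2 + (τ * χ₀ ^ β - ζ) ^ 2 / 2 :=
      (hq p).trans_eq hpe
    have h2 := key q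
    have h3 : |q| = χ₀ := by
      by_contra hne
      have := hmin |q| (abs_nonneg q) hne
      linarith
    have h4 : (q - y) ^ 2 / 2 + ψ q = (|q| - |y|) ^ 2 / 2 + (τ * |q| ^ β - ζ) ^ 2 / 2 := by
      rw [h3] at h2 ⊢
      linarith
    have hqy : q * y = χ₀ * |y| := by
      rw [hψ' q] at h4
      rw [← h3]
      linear_combination -h4 - sq_abs q / 2 - sq_abs y / 2
    rcases lt_trichotomy y 0 with hy|hy|hy
    · have : q * y = (Real.sign y * χ₀) * y := by
        rw [hqy, Real.sign_of_neg hy, abs_of_neg hy]; ring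
      exact mul_right_cancel₀ hy.ne this
    · have h0 : χ₀ = 0 := hy0 hy
      have : q = 0 := abs_eq_zero.mp (h3.trans h0)
      simp [this, h0]
    · have : q * y = (Real.sign y * χ₀) * y := by
        rw [hqy, Real.sign_of_pos hy, abs_of_pos hy]; ring
      exact mul_right_cancel₀ hy.ne' this
end

section
/- Let τ > 0, β ≥ 1 and ζ > 0, and define ψ : ℝ → ℝ by ψ(u) = ½(max{τ|u|^β − ζ, 0})². Then for every y ∈ ℝ: (i) if τ|y|^β ≤ ζ, then prox_ψ(y) = y; (ii) if τ|y|^β > ζ, then the equation βτ²χ^{2β−1} − βτζ χ^{β−1} + χ = |y| has a unique solution χ_ζ in [(ζ/τ)^{1/β}, +∞), and prox_ψ(y) = sign(y) · χ_ζ. -/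
open Real Filter

private lemma relu_sq_deriv (t : ℝ) :
    HasDerivAt (fun s : ℝ => max s 0 ^ 2 / 2) (max t 0) t := by
  rcases lt_trichotomy t 0 with h | h | h
  · have hev : (fun s : ℝ => max s 0 ^ 2 / 2) =ᶠ[nhds t] (fun _ => (0:ℝ)) := by
      filter_upwards [eventually_lt_nhds h] with s hs
      rw [max_eq_right hs.le]; norm_num
    have := (hasDerivAt_const t (0:ℝ)).congr_of_eventuallyEq hev
    simpa [max_eq_right h.le] using this
  · subst h
    rw [hasDerivAt_iff_isLittleO, Asymptotics.isLittleO_iff]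
    intro c hc
    filter_upwards [eventually_abs_sub_lt 0 (by linarith : (0:ℝ) < 2*c)] with s hs
    simp only [sub_zero, max_self, smul_zero, Real.norm_eq_abs] at hs ⊢
    have h1 : max s 0 ^ 2 ≤ s ^ 2 := by
      rcases le_or_gt s 0 with h | h
      · rw [max_eq_right h]; norm_num; positivity
      · rw [max_eq_left h.le]
    have h2 : |max s 0 ^ 2 / 2 - 0 ^ 2 / 2| = max s 0 ^ 2 / 2 := by
      norm_num
      positivity
    rw [h2]
    nlinarith [sq_abs s, abs_nonneg s]
  · have hev : (fun s : ℝ => max s 0 ^ 2 / 2) =ᶠ[nhds t] (fun s => s ^ 2 / 2) := by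
      filter_upwards [eventually_gt_nhds h] with s hs
      rw [max_eq_left hs.le]
    have hd : HasDerivAt (fun s : ℝ => s ^ 2 / 2) t t := by
      have := ((hasDerivAt_pow 2 t).div_const 2)
      simpa using this
    have := hd.congr_of_eventuallyEq hev
    simpa [max_eq_left h.le] using this

private lemma abs_rpow_deriv (β : ℝ) (hβ : 1 ≤ β) (u : ℝ) (hu : u ≠ 0) :
    HasDerivAt (fun v : ℝ => |v| ^ β) (β * |u| ^ (β - 1) * Real.sign u) u := by
  rcases hu.lt_or_gt with h | h
  · have hev : (fun v : ℝ => |v| ^ β) =ᶠ[nhds u] (fun v : ℝ => (-v) ^ β) := by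
      filter_upwards [eventually_lt_nhds h] with v hv
      rw [abs_of_neg hv]
    have h1 : HasDerivAt (fun v : ℝ => -v) (-1) u := (hasDerivAt_id u).neg
    have h2 := Real.hasDerivAt_rpow_const (p := β) (x := -u) (Or.inl (by intro hc; apply hu; linarith))
    have h3 := h2.comp u h1
    have h4 := h3.congr_of_eventuallyEq hev
    have : β * (-u) ^ (β - 1) * -1 = β * |u| ^ (β - 1) * Real.sign u := by
      rw [abs_of_neg h, Real.sign_of_neg h]
    rw [this] at h4
    exact h4
  · have hev : (fun v : ℝ => |v| ^ β) =ᶠ[nhds u] (fun v : ℝ => v ^ β) := by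
      filter_upwards [eventually_gt_nhds h] with v hv
      rw [abs_of_pos hv]
    have h2 := Real.hasDerivAt_rpow_const (p := β) (x := u) (Or.inl hu)
    have h4 := h2.congr_of_eventuallyEq hev
    have : β * u ^ (β - 1) = β * |u| ^ (β - 1) * Real.sign u := by
      rw [abs_of_pos h, Real.sign_of_pos h, mul_one]
    rw [this] at h4
    exact h4

private lemma psi_deriv (τ β ζ : ℝ) (hτ : 0 < τ) (hβ : 1 ≤ β) (hζ : 0 < ζ) (u : ℝ) :
    HasDerivAt (fun v : ℝ => (max (τ * |v| ^ β - ζ) 0) ^ 2 / 2)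
      (max (τ * |u| ^ β - ζ) 0 * (τ * β * |u| ^ (β - 1) * Real.sign u)) u := by
  have hβ0 : (0:ℝ) < β := lt_of_lt_of_le one_pos hβ
  rcases eq_or_ne u 0 with rfl | hu
  · have hc : ContinuousAt (fun v : ℝ => τ * |v| ^ β - ζ) 0 := by
      have : ContinuousAt (fun v : ℝ => |v| ^ β) 0 := by
        have h1 : ContinuousAt (fun x : ℝ => x ^ β) |(0:ℝ)| :=
          Real.continuousAt_rpow_const _ _ (Or.inr hβ0.le)
        exact h1.comp continuous_abs.continuousAt
      exact (this.const_mul τ).sub continuousAt_const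
    have hval : τ * |(0:ℝ)| ^ β - ζ < 0 := by
      rw [abs_zero, Real.zero_rpow (ne_of_gt hβ0)]
      simpa using hζ
    have hev : (fun v : ℝ => (max (τ * |v| ^ β - ζ) 0) ^ 2 / 2) =ᶠ[nhds 0] (fun _ => (0:ℝ)) := by
      filter_upwards [hc.eventually_lt continuousAt_const hval] with v hv
      rw [max_eq_right hv.le]
      norm_num
    have := (hasDerivAt_const (0:ℝ) (0:ℝ)).congr_of_eventuallyEq hev
    have heq : max (τ * |(0:ℝ)| ^ β - ζ) 0 * (τ * β * |(0:ℝ)| ^ (β - 1) * Real.sign 0) = 0 := by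
      rw [Real.sign_zero]; ring
    rw [heq]
    exact this
  · have hin : HasDerivAt (fun v : ℝ => τ * |v| ^ β - ζ)
        (τ * (β * |u| ^ (β - 1) * Real.sign u)) u :=
      ((abs_rpow_deriv β hβ u hu).const_mul τ).sub_const ζ
    have hout := relu_sq_deriv (τ * |u| ^ β - ζ)
    have hcomp := hout.comp u hin
    have : max (τ * |u| ^ β - ζ) 0 * (τ * (β * |u| ^ (β - 1) * Real.sign u)) =
        max (τ * |u| ^ β - ζ) 0 * (τ * β * |u| ^ (β - 1) * Real.sign u) := by ring
    rw [this] at hcomp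
    exact hcomp


private lemma D_mono (τ β ζ : ℝ) (hτ : 0 < τ) (hβ : 1 ≤ β) (hζ : 0 < ζ) :
    Monotone (fun u : ℝ => max (τ * |u| ^ β - ζ) 0 * (τ * β * |u| ^ (β - 1) * Real.sign u)) := by
  have hβ0 : (0:ℝ) < β := lt_of_lt_of_le one_pos hβ
  set D : ℝ → ℝ := fun u => max (τ * |u| ^ β - ζ) 0 * (τ * β * |u| ^ (β - 1) * Real.sign u)
    with hDdef
  have hnn : ∀ u : ℝ, 0 ≤ u → 0 ≤ D u := by
    intro u hu
    rcases eq_or_lt_of_le hu with rfl | hu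
    · simp [hDdef, Real.sign_zero]
    · have : Real.sign u = 1 := Real.sign_of_pos hu
      rw [hDdef]
      simp only [this, mul_one]
      have h1 : 0 ≤ max (τ * |u| ^ β - ζ) 0 := le_max_right _ _
      have h2 : (0:ℝ) ≤ τ * β * |u| ^ (β - 1) := by positivity
      exact mul_nonneg h1 h2
  have hodd : ∀ u : ℝ, D (-u) = -D u := by
    intro u
    rw [hDdef]
    simp only [abs_neg, Real.sign_neg]
    ring
  have hstep : ∀ a b : ℝ, 0 ≤ a → a ≤ b → D a ≤ D b := by
    intro a b ha hab
    rcases eq_or_lt_of_le ha with rfl | ha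
    · have : D 0 = 0 := by simp [hDdef, Real.sign_zero]
      rw [this]; exact hnn b hab
    · have hb : 0 < b := lt_of_lt_of_le ha hab
      rw [hDdef]
      simp only [Real.sign_of_pos ha, Real.sign_of_pos hb, mul_one,
        abs_of_pos ha, abs_of_pos hb]
      have h1 : max (τ * a ^ β - ζ) 0 ≤ max (τ * b ^ β - ζ) 0 := by
        apply max_le_max _ le_rfl
        have := Real.rpow_le_rpow ha.le hab hβ0.le
        nlinarith
      have h2 : a ^ (β - 1) ≤ b ^ (β - 1) :=
        Real.rpow_le_rpow ha.le hab (by linarith)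
      have h3 : (0:ℝ) ≤ τ * β * a ^ (β - 1) := by positivity
      have h4 : 0 ≤ max (τ * b ^ β - ζ) 0 := le_max_right _ _
      apply mul_le_mul h1 _ h3 h4
      have : (0:ℝ) ≤ τ * β := by positivity
      exact mul_le_mul_of_nonneg_left h2 this
  intro a b hab
  rcases le_or_gt 0 a with ha | ha
  · exact hstep a b ha hab
  · rcases le_or_gt 0 b with hb | hb
    · calc D a = -D (-a) := by rw [hodd]; ring_nf
        _ ≤ 0 := by
            have := hnn (-a) (by linarith)
            linarith
        _ ≤ D b := hnn b hb
    · have h1 : D (-b) ≤ D (-a) := hstep (-b) (-a) (by linarith) (by linarith)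
      have h2 : D (-b) = -D b := hodd b
      have h3 : D (-a) = -D a := hodd a
      linarith

/-- **Prox of `ψ = ½(max{τ|·|^β − ζ, 0})²` for `β ≥ 1` and `ζ > 0`.**
For `τ > 0`, `β ≥ 1`, `ζ > 0` and every `y ∈ ℝ`:
(i) if `τ|y|^β ≤ ζ`, then `y` itself is the unique minimizer of
`u ↦ ½(u − y)² + ψ(u)`, i.e. `prox_ψ(y) = y`;
(ii) if `τ|y|^β > ζ`, then the equation `βτ²χ^{2β−1} − βτζ χ^{β−1} + χ = |y|`
has a unique solution `χ_ζ` in `[(ζ/τ)^{1/β}, +∞)` and `prox_ψ(y) = sign y · χ_ζ`. -/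
theorem stmt8 (τ β ζ : ℝ) (hτ : 0 < τ) (hβ : 1 ≤ β) (hζ : 0 < ζ)
    (ψ : ℝ → ℝ) (hψ : ∀ u, ψ u = (max (τ * |u| ^ β - ζ) 0) ^ 2 / 2) (y : ℝ) :
    (τ * |y| ^ β ≤ ζ →
      (∀ u : ℝ, (y - y) ^ 2 / 2 + ψ y ≤ (u - y) ^ 2 / 2 + ψ u) ∧
      (∀ q : ℝ, (∀ u : ℝ, (q - y) ^ 2 / 2 + ψ q ≤ (u - y) ^ 2 / 2 + ψ u) → q = y)) ∧
    (ζ < τ * |y| ^ β →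
      ∃ χζ : ℝ, (ζ / τ) ^ (1 / β) ≤ χζ ∧
        β * τ ^ 2 * χζ ^ (2 * β - 1) - β * τ * ζ * χζ ^ (β - 1) + χζ = |y| ∧
        (∀ χ : ℝ, (ζ / τ) ^ (1 / β) ≤ χ →
          β * τ ^ 2 * χ ^ (2 * β - 1) - β * τ * ζ * χ ^ (β - 1) + χ = |y| → χ = χζ) ∧
        (∀ u : ℝ,
          (Real.sign y * χζ - y) ^ 2 / 2 + ψ (Real.sign y * χζ) ≤ (u - y) ^ 2 / 2 + ψ u) ∧
        (∀ q : ℝ, (∀ u : ℝ, (q - y) ^ 2 / 2 + ψ q ≤ (u - y) ^ 2 / 2 + ψ u) →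
          q = Real.sign y * χζ)) := by
  have hβ0 : (0:ℝ) < β := lt_of_lt_of_le one_pos hβ
  have hψnn : ∀ u, 0 ≤ ψ u := by
    intro u; rw [hψ]; positivity
  constructor
  · -- Part (i)
    intro hle
    have hψy : ψ y = 0 := by
      rw [hψ, max_eq_right (by linarith)]; norm_num
    constructor
    · intro u
      rw [hψy]
      have h1 := hψnn u
      nlinarith [sq_nonneg (u - y)]
    · intro q hq
      have h1 := hq y
      rw [hψy] at h1
      have h2 := hψnn q
      nlinarith [sq_nonneg (q - y)]
  · -- Part (ii)
    intro hgt
    set χ₀ : ℝ := (ζ / τ) ^ (1 / β) with hχ₀def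
    have hζτ : 0 < ζ / τ := div_pos hζ hτ
    have hχ₀pos : 0 < χ₀ := Real.rpow_pos_of_pos hζτ _
    have hχ₀β : τ * χ₀ ^ β = ζ := by
      rw [hχ₀def, ← Real.rpow_mul hζτ.le, one_div, inv_mul_cancel₀ (ne_of_gt hβ0),
        Real.rpow_one]
      field_simp
    have hy0 : y ≠ 0 := by
      intro h
      rw [h, abs_zero, Real.zero_rpow (ne_of_gt hβ0), mul_zero] at hgt
      linarith
    have hχ₀y : χ₀ < |y| := by
      by_contra h
      push_neg at h
      have := Real.rpow_le_rpow (abs_nonneg y) h hβ0.le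
      nlinarith
    -- the function g
    set g : ℝ → ℝ := fun χ => β * τ ^ 2 * χ ^ (2 * β - 1) - β * τ * ζ * χ ^ (β - 1) + χ
      with hgdef
    have hgid : ∀ χ : ℝ, 0 < χ → g χ = τ * β * χ ^ (β - 1) * (τ * χ ^ β - ζ) + χ := by
      intro χ hχ
      rw [hgdef]
      simp only
      rw [show 2 * β - 1 = β + (β - 1) by ring, Real.rpow_add hχ]
      ring
    have hgχ₀ : g χ₀ = χ₀ := by
      rw [hgid χ₀ hχ₀pos, hχ₀β]
      ring
    have hgy : |y| ≤ g |y| := by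
      have hypos : 0 < |y| := abs_pos.mpr hy0
      rw [hgid _ hypos]
      have h1 : 0 ≤ τ * β * |y| ^ (β - 1) * (τ * |y| ^ β - ζ) := by
        apply mul_nonneg _ (by linarith)
        positivity
      linarith
    have hgmono : StrictMonoOn g (Set.Ici χ₀) := by
      intro a ha b hb hab
      simp only [Set.mem_Ici] at ha hb
      have hpa : 0 < a := lt_of_lt_of_le hχ₀pos ha
      have hpb : 0 < b := lt_of_lt_of_le hχ₀pos hb
      rw [hgid a hpa, hgid b hpb]
      have haβ : ζ ≤ τ * a ^ β := by
        have := Real.rpow_le_rpow hχ₀pos.le ha hβ0.le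
        nlinarith
      have h1 : τ * β * a ^ (β - 1) * (τ * a ^ β - ζ) ≤ τ * β * b ^ (β - 1) * (τ * b ^ β - ζ) := by
        apply mul_le_mul
        · apply mul_le_mul_of_nonneg_left (Real.rpow_le_rpow hpa.le hab.le (by linarith))
          positivity
        · have := Real.rpow_le_rpow hpa.le hab.le hβ0.le
          nlinarith
        · linarith
        · positivity
      linarith
    -- continuity of g on [χ₀, |y|]
    have hgcont : ContinuousOn g (Set.Icc χ₀ |y|) := by
      have h1 : ∀ c : ℝ, ContinuousOn (fun χ : ℝ => χ ^ c) (Set.Icc χ₀ |y|) := by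
        intro c x hx
        exact (Real.continuousAt_rpow_const x c
          (Or.inl (ne_of_gt (lt_of_lt_of_le hχ₀pos hx.1)))).continuousWithinAt
      exact ((continuousOn_const.mul (h1 _)).sub (continuousOn_const.mul (h1 _))).add
        continuousOn_id
    -- existence of χζ by IVT
    obtain ⟨χζ, hχζmem, hχζeq⟩ : ∃ χ ∈ Set.Icc χ₀ |y|, g χ = |y| := by
      have := intermediate_value_Icc hχ₀y.le hgcont
      have hmem : |y| ∈ Set.Icc (g χ₀) (g |y|) := by
        rw [hgχ₀]
        exact ⟨hχ₀y.le, hgy⟩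
      obtain ⟨χ, hχ, hχeq⟩ := this hmem
      exact ⟨χ, hχ, hχeq⟩
    have hχζ₀ : χ₀ ≤ χζ := hχζmem.1
    have hχζpos : 0 < χζ := lt_of_lt_of_le hχ₀pos hχζ₀
    -- setup for prox parts
    set s : ℝ := Real.sign y with hsdef
    have hs : s = -1 ∨ s = 1 := Real.sign_apply_eq_of_ne_zero y hy0
    have hsy : s * |y| = y := by
      rcases lt_trichotomy y 0 with h | h | h
      · rw [hsdef, Real.sign_of_neg h, abs_of_neg h]; ring
      · exact absurd h hy0
      · rw [hsdef, Real.sign_of_pos h, abs_of_pos h]; ring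
    set xs : ℝ := s * χζ with hxsdef
    have hxabs : |xs| = χζ := by
      rw [hxsdef, abs_mul, abs_of_pos hχζpos]
      rcases hs with h | h <;> rw [h] <;> norm_num
    have hxsign : Real.sign xs = s := by
      rcases hs with h | h
      · rw [hxsdef, h]
        have : (-1 : ℝ) * χζ < 0 := by nlinarith
        rw [Real.sign_of_neg this]
      · rw [hxsdef, h]
        have : (1 : ℝ) * χζ > 0 := by nlinarith
        rw [Real.sign_of_pos this]
    set D : ℝ → ℝ := fun u => max (τ * |u| ^ β - ζ) 0 * (τ * β * |u| ^ (β - 1) * Real.sign u)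
      with hDdef
    have hmono : Monotone D := D_mono τ β ζ hτ hβ hζ
    set f : ℝ → ℝ := fun u => (u - y) ^ 2 / 2 + ψ u with hfdef
    have hfd : ∀ u : ℝ, HasDerivAt f (u - y + D u) u := by
      intro u
      have h1 : HasDerivAt (fun v : ℝ => (v - y) ^ 2 / 2) (u - y) u := by
        have h := (((hasDerivAt_id u).sub_const y).pow 2).div_const 2
        refine h.congr_deriv ?_
        simp
      have h2 : HasDerivAt ψ (D u) u :=
        (psi_deriv τ β ζ hτ hβ hζ u).congr_of_eventuallyEq
          (Filter.Eventually.of_forall hψ)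
      exact h1.add h2
    have hχζβ : ζ ≤ τ * χζ ^ β := by
      have := Real.rpow_le_rpow hχ₀pos.le hχζ₀ hβ0.le
      nlinarith
    have hFxs : xs - y + D xs = 0 := by
      have hDxs : D xs = (τ * χζ ^ β - ζ) * (τ * β * χζ ^ (β - 1)) * s := by
        rw [hDdef]
        simp only
        rw [hxabs, hxsign, max_eq_left (by linarith)]
        ring
      have hgv : τ * β * χζ ^ (β - 1) * (τ * χζ ^ β - ζ) + χζ = |y| := by
        rw [← hgid χζ hχζpos]
        exact hχζeq
      rw [hDxs, hxsdef]
      have : s * χζ - y + (τ * χζ ^ β - ζ) * (τ * β * χζ ^ (β - 1)) * s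
          = s * (τ * β * χζ ^ (β - 1) * (τ * χζ ^ β - ζ) + χζ) - y := by ring
      rw [this, hgv, hsy]
      ring
    have hmin : ∀ u : ℝ, f xs ≤ f u := by
      have hmonof : MonotoneOn f (Set.Ici xs) := by
        apply monotoneOn_of_deriv_nonneg (convex_Ici xs)
        · exact fun z _ => (hfd z).differentiableAt.continuousAt.continuousWithinAt
        · exact fun z _ => (hfd z).differentiableAt.differentiableWithinAt
        · intro z hz
          rw [interior_Ici] at hz
          rw [(hfd z).deriv]
          have h1 : xs < z := hz
          have h2 : D xs ≤ D z := hmono h1.le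
          linarith
      have hantif : AntitoneOn f (Set.Iic xs) := by
        apply antitoneOn_of_deriv_nonpos (convex_Iic xs)
        · exact fun z _ => (hfd z).differentiableAt.continuousAt.continuousWithinAt
        · exact fun z _ => (hfd z).differentiableAt.differentiableWithinAt
        · intro z hz
          rw [interior_Iic] at hz
          rw [(hfd z).deriv]
          have h1 : z < xs := hz
          have h2 : D z ≤ D xs := hmono h1.le
          linarith
      intro u
      rcases le_total xs u with h | h
      · exact hmonof Set.self_mem_Ici h h
      · exact hantif h Set.self_mem_Iic h
    refine ⟨χζ, hχζ₀, hχζeq, ?_, ?_, ?_⟩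
    · -- uniqueness of solution
      intro χ hχ heq
      exact hgmono.injOn hχ hχζ₀ (heq.trans hχζeq.symm)
    · -- minimality
      intro u
      exact hmin u
    · -- uniqueness of minimizer
      intro q hq
      have hlm : IsLocalMin f q := Filter.Eventually.of_forall hq
      have hq0 : q - y + D q = 0 := hlm.hasDerivAt_eq_zero (hfd q)
      rcases lt_trichotomy q xs with h | h | h
      · have := hmono h.le
        linarith
      · exact h
      · have := hmono h.le
        linarith
end

section
/- Let τ > 0, β ≥ 1 and ζ ∈ ℝ, and define ψ : ℝ → ℝ by ψ(u) = ½(max{τ|u|^β − ζ, 0})². Then ψ is a real-valued convex function and its subdifferential at 0 is: ∂ψ(0) = [τζ, −τζ] if ζ < 0 and β = 1, and ∂ψ(0) = {0} otherwise. -/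
open Set Filter

-- if t ≤ f ε for all ε>0 and f → 0 as ε → 0⁺ then t ≤ 0
lemma stmt9_aux (t : ℝ) (f : ℝ → ℝ)
    (hf : Tendsto f (nhdsWithin 0 (Set.Ioi 0)) (nhds 0))
    (h : ∀ ε : ℝ, 0 < ε → t ≤ f ε) : t ≤ 0 :=
  ge_of_tendsto hf (eventually_nhdsWithin_of_forall fun ε hε => h ε hε)

lemma stmt9_rpow_tendsto {p : ℝ} (hp : 0 < p) :
    Tendsto (fun ε : ℝ => ε ^ p) (nhdsWithin 0 (Set.Ioi 0)) (nhds 0) := by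
  have h := (Real.continuousAt_rpow_const 0 p (Or.inr hp.le)).tendsto
  rw [Real.zero_rpow hp.ne'] at h
  exact h.mono_left nhdsWithin_le_nhds

/-- **Convexity and subdifferential at `0` of `ψ = ½(max{τ|·|^β − ζ, 0})²`.**
For `τ > 0`, `β ≥ 1` and `ζ ∈ ℝ`, the function `ψ` is convex on `ℝ` and its
subdifferential at `0`, `∂ψ(0) = {t : ∀ v, ψ(v) ≥ ψ(0) + t(v − 0)}`, equals
`[τζ, −τζ]` when `ζ < 0` and `β = 1`, and `{0}` otherwise. -/
theorem stmt9 (τ β ζ : ℝ) (hτ : 0 < τ) (hβ : 1 ≤ β)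
    (ψ : ℝ → ℝ) (hψ : ∀ u, ψ u = (max (τ * |u| ^ β - ζ) 0) ^ 2 / 2) :
    ConvexOn ℝ Set.univ ψ ∧
    ((ζ < 0 ∧ β = 1 →
        {t : ℝ | ∀ v : ℝ, ψ 0 + t * (v - 0) ≤ ψ v} = Set.Icc (τ * ζ) (-(τ * ζ))) ∧
      (¬(ζ < 0 ∧ β = 1) →
        {t : ℝ | ∀ v : ℝ, ψ 0 + t * (v - 0) ≤ ψ v} = {0})) := by
  have hβ0 : (0:ℝ) < β := lt_of_lt_of_le one_pos hβ
  -- basic facts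
  have hrpow_nonneg : ∀ v : ℝ, 0 ≤ |v| ^ β := fun v => Real.rpow_nonneg (abs_nonneg v) β
  have hψ0 : ψ 0 = (max (-ζ) 0) ^ 2 / 2 := by
    rw [hψ 0]
    simp [Real.zero_rpow hβ0.ne']
  -- convexity
  have hconv : ConvexOn ℝ Set.univ ψ := by
    have habs : ConvexOn ℝ Set.univ (fun u : ℝ => |u| ^ β) := by
      have himg : (fun u : ℝ => |u|) '' Set.univ = Set.Ici 0 := by
        ext x
        constructor
        · rintro ⟨y, -, rfl⟩; exact abs_nonneg y
        · intro hx; exact ⟨x, Set.mem_univ x, abs_of_nonneg hx⟩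
      have h1 : ConvexOn ℝ ((fun u : ℝ => |u|) '' Set.univ) (fun x : ℝ => x ^ β) := by
        rw [himg]; exact convexOn_rpow hβ
      have h2 : ConvexOn ℝ Set.univ (fun u : ℝ => |u|) := by
        exact (convexOn_univ_norm (E := ℝ))
      have h3 : MonotoneOn (fun x : ℝ => x ^ β) ((fun u : ℝ => |u|) '' Set.univ) := by
        rw [himg]
        intro x hx y hy hxy
        exact Real.rpow_le_rpow hx hxy hβ0.le
      exact h1.comp h2 h3
    have hF : ConvexOn ℝ Set.univ (fun u : ℝ => max (τ * |u| ^ β - ζ) 0) := by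
      have h4 : ConvexOn ℝ Set.univ (fun u : ℝ => τ * |u| ^ β - ζ) := by
        have h5 : ConvexOn ℝ Set.univ (fun u : ℝ => τ • (|u| ^ β)) := habs.smul hτ.le
        have h6 := h5.sub (concaveOn_const ζ convex_univ)
        simpa [smul_eq_mul, sub_eq_add_neg, Pi.add_def, Pi.neg_def] using h6
      simpa [Pi.sup_def] using h4.sup (convexOn_const 0 convex_univ)
    have hF2 := hF.pow (fun u _ => le_max_right _ 0) 2
    have := hF2.smul (c := (2:ℝ)⁻¹) (by norm_num)
    have heq : (fun x : ℝ => (2:ℝ)⁻¹ • ((fun u : ℝ => max (τ * |u| ^ β - ζ) 0) ^ 2) x) = ψ := by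
      funext u
      rw [hψ u]
      simp [Pi.pow_apply, smul_eq_mul]
      ring
    rwa [heq] at this
  refine ⟨hconv, ?_, ?_⟩
  · -- case ζ < 0, β = 1
    rintro ⟨hζ, rfl⟩
    have hψ' : ∀ v : ℝ, ψ v = (τ * |v| - ζ) ^ 2 / 2 := by
      intro v
      rw [hψ v, Real.rpow_one]
      rw [max_eq_left]
      nlinarith [abs_nonneg v, mul_nonneg hτ.le (abs_nonneg v)]
    ext t
    simp only [Set.mem_setOf_eq, Set.mem_Icc]
    constructor
    · intro h
      have key : ∀ v : ℝ, t * v ≤ τ ^ 2 * v ^ 2 / 2 - τ * ζ * |v| := by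
        intro v
        have h1 := h v
        rw [hψ' v, hψ' 0] at h1
        simp only [abs_zero, mul_zero, zero_sub, sub_zero] at h1
        nlinarith [sq_abs v]
      constructor
      · -- τ * ζ ≤ t
        have : -t ≤ -(τ * ζ) := by
          apply le_of_forall_pos_le_add
          intro ε hε
          set v : ℝ := 2 * ε / τ ^ 2 with hv_def
          have hv : 0 < v := by positivity
          have h1 := key (-v)
          rw [abs_neg, abs_of_nonneg hv.le] at h1
          have he : τ ^ 2 * (-v) ^ 2 / 2 = ε * v := by
            rw [hv_def]; field_simp
          have h4 : -t * v ≤ (-(τ * ζ) + ε) * v := by nlinarith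
          exact (mul_le_mul_iff_of_pos_right hv).mp h4
        linarith
      · -- t ≤ -(τ * ζ)
        apply le_of_forall_pos_le_add
        intro ε hε
        set v : ℝ := 2 * ε / τ ^ 2 with hv_def
        have hv : 0 < v := by positivity
        have h1 := key v
        rw [abs_of_nonneg hv.le] at h1
        have he : τ ^ 2 * v ^ 2 / 2 = ε * v := by
          rw [hv_def]; field_simp
        have h4 : t * v ≤ (-(τ * ζ) + ε) * v := by nlinarith
        exact (mul_le_mul_iff_of_pos_right hv).mp h4
    · rintro ⟨h1, h2⟩ v
      rw [hψ' v, hψ' 0]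
      have habs' : t * v ≤ |t| * |v| := (le_abs_self (t * v)).trans (le_of_eq (abs_mul t v))
      have ht : |t| ≤ -(τ * ζ) := abs_le.mpr ⟨by linarith, h2⟩
      have h3 : t * v ≤ -(τ * ζ) * |v| :=
        habs'.trans (mul_le_mul_of_nonneg_right ht (abs_nonneg v))
      simp only [abs_zero, mul_zero, zero_sub, sub_zero]
      have hvv : τ ^ 2 * |v| ^ 2 = τ ^ 2 * v ^ 2 := by rw [sq_abs]
      nlinarith [hvv, sq_nonneg (τ * v), abs_nonneg v]
  · -- case ¬(ζ < 0 ∧ β = 1)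
    intro hcase
    ext t
    simp only [Set.mem_setOf_eq, Set.mem_singleton_iff]
    constructor
    · intro h
      have key : ∀ v : ℝ, t * v ≤ ψ v - ψ 0 := fun v => by have := h v; linarith
      -- we show: ∀ s ∈ {t, -t}, s ≤ 0, via a bound valid for every sign
      have main : ∀ s : ℝ, (∀ ε : ℝ, 0 < ε → s * ε ≤ ψ ε - ψ 0) → s ≤ 0 := by
        intro s hs
        rcases not_and_or.mp hcase with hζ | hβ1
        · -- ζ ≥ 0
          push_neg at hζ
          have hψ00 : ψ 0 = 0 := by
            rw [hψ0, max_eq_right (by linarith)]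
            norm_num
          apply stmt9_aux s (fun ε => τ ^ 2 * ε ^ (2 * β - 1) / 2)
          · have := (stmt9_rpow_tendsto (p := 2 * β - 1) (by linarith)).const_mul (τ ^ 2)
            simpa using this.div_const 2
          · intro ε hε
            have h1 := hs ε hε
            rw [hψ ε, hψ00, abs_of_nonneg hε.le] at h1
            have hb : max (τ * ε ^ β - ζ) 0 ≤ τ * ε ^ β := by
              apply max_le
              · linarith
              · exact mul_nonneg hτ.le (Real.rpow_nonneg hε.le β)
            have hb0 : (0:ℝ) ≤ max (τ * ε ^ β - ζ) 0 := le_max_right _ _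
            have h2 : s * ε ≤ (τ * ε ^ β) ^ 2 / 2 := by
              nlinarith
            have hsplit : ε ^ (2 * β) = ε ^ (2 * β - 1) * ε := by
              conv_lhs => rw [show (2*β) = (2*β-1) + 1 by ring, Real.rpow_add hε, Real.rpow_one]
            have hsq : (ε ^ β) ^ 2 = ε ^ (2 * β) := by
              rw [← Real.rpow_natCast (ε ^ β) 2, ← Real.rpow_mul hε.le]
              norm_num [mul_comm]
            have h3 : (τ * ε ^ β) ^ 2 / 2 = (τ ^ 2 * ε ^ (2 * β - 1) / 2) * ε := by
              rw [mul_pow, hsq, hsplit]; ring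
            exact (mul_le_mul_iff_of_pos_right hε).mp (h2.trans_eq h3)
        · -- ζ < 0 (else previous case applies) ... here β ≠ 1 so β > 1
          have hβ1' : 1 < β := lt_of_le_of_ne hβ (Ne.symm hβ1)
          by_cases hζ : 0 ≤ ζ
          · -- reuse the ζ ≥ 0 argument
            have hψ00 : ψ 0 = 0 := by
              rw [hψ0, max_eq_right (by linarith)]
              norm_num
            apply stmt9_aux s (fun ε => τ ^ 2 * ε ^ (2 * β - 1) / 2)
            · have := (stmt9_rpow_tendsto (p := 2 * β - 1) (by linarith)).const_mul (τ ^ 2)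
              simpa using this.div_const 2
            · intro ε hε
              have h1 := hs ε hε
              rw [hψ ε, hψ00, abs_of_nonneg hε.le] at h1
              have hb : max (τ * ε ^ β - ζ) 0 ≤ τ * ε ^ β := by
                apply max_le
                · linarith
                · exact mul_nonneg hτ.le (Real.rpow_nonneg hε.le β)
              have hb0 : (0:ℝ) ≤ max (τ * ε ^ β - ζ) 0 := le_max_right _ _
              have h2 : s * ε ≤ (τ * ε ^ β) ^ 2 / 2 := by nlinarith
              have hsplit : ε ^ (2 * β) = ε ^ (2 * β - 1) * ε := by
                conv_lhs => rw [show (2*β) = (2*β-1) + 1 by ring, Real.rpow_add hε, Real.rpow_one]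
              have hsq : (ε ^ β) ^ 2 = ε ^ (2 * β) := by
                rw [← Real.rpow_natCast (ε ^ β) 2, ← Real.rpow_mul hε.le]
                norm_num [mul_comm]
              have h3 : (τ * ε ^ β) ^ 2 / 2 = (τ ^ 2 * ε ^ (2 * β - 1) / 2) * ε := by
                rw [mul_pow, hsq, hsplit]; ring
              exact (mul_le_mul_iff_of_pos_right hε).mp (h2.trans_eq h3)
          · push_neg at hζ
            have hψ00 : ψ 0 = ζ ^ 2 / 2 := by
              rw [hψ0, max_eq_left (by linarith)]
              ring
            apply stmt9_aux s (fun ε => τ * ε ^ (β - 1) * (τ * ε ^ β - 2 * ζ) / 2)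
            · have t1 : Tendsto (fun ε : ℝ => τ * ε ^ (β - 1)) (nhdsWithin 0 (Set.Ioi 0)) (nhds 0) := by
                have := (stmt9_rpow_tendsto (p := β - 1) (by linarith)).const_mul τ
                simpa using this
              have t2 : Tendsto (fun ε : ℝ => τ * ε ^ β - 2 * ζ) (nhdsWithin 0 (Set.Ioi 0)) (nhds (-(2*ζ))) := by
                have := ((stmt9_rpow_tendsto (p := β) hβ0).const_mul τ).sub_const (2 * ζ)
                simpa using this
              have := (t1.mul t2).div_const 2
              simpa using this
            · intro ε hε
              have h1 := hs ε hε
              rw [hψ ε, hψ00, abs_of_nonneg hε.le] at h1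
              have hmax : max (τ * ε ^ β - ζ) 0 = τ * ε ^ β - ζ := by
                apply max_eq_left
                nlinarith [mul_nonneg hτ.le (Real.rpow_nonneg hε.le β)]
              rw [hmax] at h1
              have hsplit : ε ^ β = ε ^ (β - 1) * ε := by
                conv_lhs => rw [show β = (β-1) + 1 by ring, Real.rpow_add hε, Real.rpow_one]
              have h3 : (τ * ε ^ β - ζ) ^ 2 / 2 - ζ ^ 2 / 2
                  = (τ * ε ^ (β - 1) * (τ * ε ^ β - 2 * ζ) / 2) * ε := by
                rw [hsplit]; ring
              have h4 : s * ε ≤ (τ * ε ^ (β - 1) * (τ * ε ^ β - 2 * ζ) / 2) * ε := by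
                linarith [h3]
              exact (mul_le_mul_iff_of_pos_right hε).mp h4
      have h1 : t ≤ 0 := main t (fun ε hε => by
        have := key ε
        linarith)
      have h2 : -t ≤ 0 := main (-t) (fun ε hε => by
        have := key (-ε)
        have heq : ψ (-ε) = ψ ε := by rw [hψ, hψ, abs_neg]
        nlinarith)
      linarith
    · rintro rfl v
      rw [hψ v, hψ0]
      have h1 : max (-ζ) 0 ≤ max (τ * |v| ^ β - ζ) 0 := by
        apply max_le_max _ le_rfl
        nlinarith [mul_nonneg hτ.le (hrpow_nonneg v)]
      have h2 : (0:ℝ) ≤ max (-ζ) 0 := le_max_right _ _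
      nlinarith
end

section
/- Let C be a nonempty closed convex subset of ℝ^M, let τ > 0 and β ≥ 1, and define h : ℝ^M → ℝ by h(y) = τ d_C(y)^β, where d_C is the distance to C. Equip ℝ^M × ℝ with the product norm. Then for every (y,ζ) ∈ ℝ^M × ℝ, the metric projection of (y,ζ) onto epi h equals (p,θ) with θ = max{τ d_C(p)^β, ζ} and: p = y if y ∈ C, and otherwise p = α y + (1−α) P_C(y), where α = prox_{½(max{τ|·|^β − ζ, 0})²}(d_C(y)) / d_C(y). -/
lemma aux_max_sub (a b : ℝ) : max a b - b = max (a - b) 0 := by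
  rcases le_total a b with hab | hab
  · rw [max_eq_right hab, max_eq_right (by linarith : a - b ≤ 0), sub_self]
  · rw [max_eq_left hab, max_eq_left (by linarith : (0:ℝ) ≤ a - b)]

lemma aux_max_sq {a ξ ζ : ℝ} (hle : a ≤ ξ) : (max (a - ζ) 0) ^ 2 ≤ (ξ - ζ) ^ 2 := by
  have h1 : max (a - ζ) 0 ≤ |ξ - ζ| :=
    max_le (le_trans (by linarith) (le_abs_self _)) (abs_nonneg _)
  calc (max (a - ζ) 0) ^ 2 ≤ |ξ - ζ| ^ 2 := by
        exact pow_le_pow_left₀ (le_max_right _ _) h1 2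
    _ = (ξ - ζ) ^ 2 := sq_abs _

/-- **Epigraphical projection for `h = τ d_C(·)^β` (Proposition on distance
functions).**  `C` is a nonempty closed convex subset of `ℝ^M`, `P` is the metric
projection onto `C`, `d_C(y) = ‖y − P(y)‖`, and `h(y) = τ d_C(y)^β` with `τ > 0`,
`β ≥ 1`.  `ℝ^M × ℝ` carries the product norm (distances written as
`√(‖·‖² + (·)²)`).  For every `(y,ζ)`, the metric projection of `(y,ζ)` onto
`epi h` is `(p, θ)` with `θ = max{τ d_C(p)^β, ζ}` where: `p = y` if `y ∈ C`, and
otherwise `p = α y + (1 − α) P(y)` with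
`α = prox_{½(max{τ|·|^β − ζ, 0})²}(d_C(y)) / d_C(y)`. -/
theorem stmt10 {M : ℕ} (C : Set (EuclideanSpace ℝ (Fin M)))
    (hCne : C.Nonempty) (hCcl : IsClosed C) (hCcv : Convex ℝ C)
    (τ β : ℝ) (hτ : 0 < τ) (hβ : 1 ≤ β)
    (P : EuclideanSpace ℝ (Fin M) → EuclideanSpace ℝ (Fin M))
    (hP : ∀ y, P y ∈ C ∧ ∀ z ∈ C, ‖y - P y‖ ≤ ‖y - z‖)
    (h : EuclideanSpace ℝ (Fin M) → ℝ)
    (hh : ∀ u, h u = τ * ‖u - P u‖ ^ β)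
    (y : EuclideanSpace ℝ (Fin M)) (ζ : ℝ) :
    (y ∈ C →
      h y ≤ max (h y) ζ ∧
      ∀ (u : EuclideanSpace ℝ (Fin M)) (ξ : ℝ), h u ≤ ξ →
        Real.sqrt (‖y - y‖ ^ 2 + (max (h y) ζ - ζ) ^ 2) ≤
          Real.sqrt (‖u - y‖ ^ 2 + (ξ - ζ) ^ 2)) ∧
    (y ∉ C →
      ∀ π : ℝ,
        -- `π = prox_{½(max{τ|·|^β − ζ, 0})²}(d_C(y))`
        ((∀ t : ℝ,
            (π - ‖y - P y‖) ^ 2 / 2 + (max (τ * |π| ^ β - ζ) 0) ^ 2 / 2 ≤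
              (t - ‖y - P y‖) ^ 2 / 2 + (max (τ * |t| ^ β - ζ) 0) ^ 2 / 2)) →
        ∀ p : EuclideanSpace ℝ (Fin M),
          p = (π / ‖y - P y‖) • y + (1 - π / ‖y - P y‖) • P y →
          h p ≤ max (h p) ζ ∧
          ∀ (u : EuclideanSpace ℝ (Fin M)) (ξ : ℝ), h u ≤ ξ →
            Real.sqrt (‖p - y‖ ^ 2 + (max (h p) ζ - ζ) ^ 2) ≤
              Real.sqrt (‖u - y‖ ^ 2 + (ξ - ζ) ^ 2)) := by
  constructor
  · intro hyC
    have hPy : ‖y - P y‖ = 0 := le_antisymm (by simpa using (hP y).2 y hyC) (norm_nonneg _)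
    have hhy : h y = 0 := by
      rw [hh, hPy, Real.zero_rpow (by linarith), mul_zero]
    refine ⟨le_max_left _ _, ?_⟩
    intro u ξ hu
    apply Real.sqrt_le_sqrt
    have hξ : (0:ℝ) ≤ ξ := le_trans (by rw [hh]; positivity) hu
    have hmax : max (h y) ζ - ζ = max (h y - ζ) 0 := aux_max_sub _ _
    rw [hmax, sub_self, norm_zero]
    have := aux_max_sq (ζ := ζ) (hhy ▸ hξ : h y ≤ ξ)
    nlinarith [this]
  · intro hyC π hπ p hp
    set d := ‖y - P y‖ with hd_def
    have hd : 0 < d := by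
      rw [hd_def, norm_pos_iff, sub_ne_zero]
      intro hEq
      exact hyC (hEq ▸ (hP y).1)
    -- π ≥ 0
    have hπ0 : 0 ≤ π := by
      have h1 := hπ |π|
      rw [abs_abs] at h1
      nlinarith [sq_abs π, neg_abs_le π, hd]
    -- π ≤ d
    have hπd : π ≤ d := by
      by_contra hc
      push_neg at hc
      have h1 := hπ d
      have hmono : max (τ * |d| ^ β - ζ) 0 ≤ max (τ * |π| ^ β - ζ) 0 := by
        refine max_le_max ?_ le_rfl
        have : |d| ^ β ≤ |π| ^ β := by
          apply Real.rpow_le_rpow (abs_nonneg _)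
          · rw [abs_of_nonneg hd.le, abs_of_nonneg hπ0]; linarith
          · linarith
        nlinarith
      have hsq : (max (τ * |d| ^ β - ζ) 0) ^ 2 ≤ (max (τ * |π| ^ β - ζ) 0) ^ 2 :=
        pow_le_pow_left₀ (le_max_right _ _) hmono 2
      nlinarith [h1, hsq]
    -- norms
    have hpPy : p - P y = (π / d) • (y - P y) := by rw [hp]; module
    have hpy : p - y = (1 - π / d) • (P y - y) := by rw [hp]; module
    have hnpPy : ‖p - P y‖ = π := by
      rw [hpPy, norm_smul, Real.norm_eq_abs, abs_of_nonneg (div_nonneg hπ0 hd.le), ← hd_def,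
        div_mul_cancel₀ _ hd.ne']
    have hnpy : ‖p - y‖ = d - π := by
      rw [hpy, norm_smul, Real.norm_eq_abs, norm_sub_rev, ← hd_def,
        abs_of_nonneg (by rw [sub_nonneg]; exact div_le_one_of_le₀ hπd hd.le)]
      field_simp
    have hdp : ‖p - P p‖ = π := by
      apply le_antisymm
      · calc ‖p - P p‖ ≤ ‖p - P y‖ := (hP p).2 (P y) (hP y).1
          _ = π := hnpPy
      · have h1 : d ≤ ‖y - P p‖ := (hP y).2 (P p) (hP p).1
        have h2 : ‖y - P p‖ ≤ ‖y - p‖ + ‖p - P p‖ := by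
          have : y - P p = (y - p) + (p - P p) := by abel
          rw [this]; exact norm_add_le _ _
        have h3 : ‖y - p‖ = d - π := by rw [norm_sub_rev, hnpy]
        linarith
    have hhp : h p = τ * π ^ β := by rw [hh, hdp]
    refine ⟨le_max_left _ _, ?_⟩
    intro u ξ hu
    apply Real.sqrt_le_sqrt
    set s := ‖u - P u‖ with hs_def
    have hs0 : 0 ≤ s := norm_nonneg _
    have hsd1 : d ≤ ‖u - y‖ + s := by
      have h1 : d ≤ ‖y - P u‖ := (hP y).2 (P u) (hP u).1
      have h2 : ‖y - P u‖ ≤ ‖y - u‖ + ‖u - P u‖ := by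
        have : y - P u = (y - u) + (u - P u) := by abel
        rw [this]; exact norm_add_le _ _
      have h3 : ‖y - u‖ = ‖u - y‖ := norm_sub_rev _ _
      linarith
    have hsd2 : s ≤ ‖u - y‖ + d := by
      have h1 : s ≤ ‖u - P y‖ := (hP u).2 (P y) (hP y).1
      have h2 : ‖u - P y‖ ≤ ‖u - y‖ + ‖y - P y‖ := by
        have : u - P y = (u - y) + (y - P y) := by abel
        rw [this]; exact norm_add_le _ _
      linarith
    have huy2 : (s - d) ^ 2 ≤ ‖u - y‖ ^ 2 := sq_le_sq' (by linarith) (by linarith)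
    have hξ : τ * s ^ β ≤ ξ := by rw [hh] at hu; exact hu
    have hmax2 : (max (τ * |s| ^ β - ζ) 0) ^ 2 ≤ (ξ - ζ) ^ 2 := by
      rw [abs_of_nonneg hs0]; exact aux_max_sq hξ
    have hps := hπ s
    have hmaxp : max (h p) ζ - ζ = max (τ * |π| ^ β - ζ) 0 := by
      rw [aux_max_sub, hhp, abs_of_nonneg hπ0]
    rw [hmaxp, hnpy]
    have hring : (d - π) ^ 2 = (π - d) ^ 2 := by ring
    linarith [hps, huy2, hmax2]
end

section
/- Let C be a nonempty closed convex subset of ℝ^M, let τ > 0 and ζ < 0, and define g : ℝ^M → ℝ by g(y) = ½(max{τ d_C(y) − ζ, 0})² = ½(τ d_C(y) − ζ)². If y ∈ ℝ^M satisfies d_C(y) ≤ −τζ, then the unique minimizer over u ∈ ℝ^M of ½‖u−y‖² + g(u) is P_C(y). -/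
set_option maxHeartbeats 1000000 in
/-- **Prox of `g = ½(max{τ d_C(·) − ζ, 0})²` saturates at the projection onto `C`.**
`C` is a nonempty closed convex subset of `ℝ^M`, `P` is the metric projection onto
`C` and `d_C(y) = ‖y − P(y)‖`.  For `τ > 0` and `ζ < 0` one has
`g(u) = ½(τ d_C(u) − ζ)²`, and if `d_C(y) ≤ −τζ` then `P(y)` is the unique
minimizer over `u ∈ ℝ^M` of `½‖u − y‖² + g(u)`. -/
theorem stmt11 {M : ℕ} (C : Set (EuclideanSpace ℝ (Fin M)))
    (hCne : C.Nonempty) (hCcl : IsClosed C) (hCcv : Convex ℝ C)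
    (τ ζ : ℝ) (hτ : 0 < τ) (hζ : ζ < 0)
    (P : EuclideanSpace ℝ (Fin M) → EuclideanSpace ℝ (Fin M))
    (hP : ∀ u, P u ∈ C ∧ ∀ z ∈ C, ‖u - P u‖ ≤ ‖u - z‖)
    (g : EuclideanSpace ℝ (Fin M) → ℝ)
    (hg : ∀ u, g u = (max (τ * ‖u - P u‖ - ζ) 0) ^ 2 / 2)
    (y : EuclideanSpace ℝ (Fin M)) (hy : ‖y - P y‖ ≤ -(τ * ζ)) :
    (∀ u, g u = (τ * ‖u - P u‖ - ζ) ^ 2 / 2) ∧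
    (∀ u : EuclideanSpace ℝ (Fin M),
        ‖P y - y‖ ^ 2 / 2 + g (P y) ≤ ‖u - y‖ ^ 2 / 2 + g u) ∧
    (∀ q : EuclideanSpace ℝ (Fin M),
        (∀ u : EuclideanSpace ℝ (Fin M), ‖q - y‖ ^ 2 / 2 + g q ≤ ‖u - y‖ ^ 2 / 2 + g u) →
        q = P y) := by
  -- the max is always attained at the left branch
  have hg' : ∀ u, g u = (τ * ‖u - P u‖ - ζ) ^ 2 / 2 := by
    intro u
    rw [hg u, max_eq_left]
    nlinarith [norm_nonneg (u - P u)]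
  -- d(P y) = 0
  have hdPy : ‖P y - P (P y)‖ = 0 := by
    have h := (hP (P y)).2 (P y) (hP y).1
    rw [sub_self, norm_zero] at h
    exact le_antisymm h (norm_nonneg _)
  -- 1-Lipschitz estimates of the distance function
  have hlip : ∀ u : EuclideanSpace ℝ (Fin M),
      (‖y - P y‖ - ‖u - P u‖) ^ 2 ≤ ‖u - y‖ ^ 2 := by
    intro u
    have h1 : ‖y - P y‖ ≤ ‖u - y‖ + ‖u - P u‖ := by
      have := (hP y).2 (P u) (hP u).1
      have h2 : ‖y - P u‖ ≤ ‖y - u‖ + ‖u - P u‖ := by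
        calc ‖y - P u‖ = ‖(y - u) + (u - P u)‖ := by abel_nf
          _ ≤ ‖y - u‖ + ‖u - P u‖ := norm_add_le _ _
      rw [norm_sub_rev u y]
      linarith
    have h2 : ‖u - P u‖ ≤ ‖u - y‖ + ‖y - P y‖ := by
      have := (hP u).2 (P y) (hP y).1
      have h3 : ‖u - P y‖ ≤ ‖u - y‖ + ‖y - P y‖ := by
        calc ‖u - P y‖ = ‖(u - y) + (y - P y)‖ := by abel_nf
          _ ≤ ‖u - y‖ + ‖y - P y‖ := norm_add_le _ _
      linarith
    have := sq_le_sq' (by linarith : -‖u - y‖ ≤ ‖y - P y‖ - ‖u - P u‖)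
      (by linarith : ‖y - P y‖ - ‖u - P u‖ ≤ ‖u - y‖)
    exact this
  -- the main energy inequality with a quadratic gap
  have main : ∀ u : EuclideanSpace ℝ (Fin M),
      ‖P y - y‖ ^ 2 / 2 + g (P y) + ‖u - P u‖ ^ 2 * (1 + τ ^ 2) / 2
        ≤ ‖u - y‖ ^ 2 / 2 + g u := by
    intro u
    rw [hg' u, hg' (P y), hdPy]
    have h1 := hlip u
    have hdu : 0 ≤ ‖u - P u‖ := norm_nonneg _
    have hgap : 0 ≤ ‖u - P u‖ * (-(τ * ζ) - ‖y - P y‖) :=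
      mul_nonneg hdu (by linarith)
    have hrev : ‖P y - y‖ = ‖y - P y‖ := norm_sub_rev _ _
    rw [hrev]
    nlinarith [h1, hgap]
  refine ⟨hg', ?_, ?_⟩
  · intro u
    have h1 := main u
    have h2 : (0:ℝ) ≤ ‖u - P u‖ ^ 2 * (1 + τ ^ 2) :=
      mul_nonneg (sq_nonneg _) (by nlinarith)
    linarith
  -- uniqueness
  intro q hq
  have h1 := hq (P y)
  have h2 := main q
  have hpos : (0:ℝ) < 1 + τ ^ 2 := by nlinarith
  have hdq : ‖q - P q‖ = 0 := by
    have hsq : ‖q - P q‖ ^ 2 * (1 + τ ^ 2) ≤ 0 := by linarith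
    have : ‖q - P q‖ ^ 2 ≤ 0 := by
      by_contra h
      push_neg at h
      nlinarith
    have := le_antisymm (by nlinarith [norm_nonneg (q - P q)] : ‖q - P q‖ ^ 2 ≤ 0)
        (sq_nonneg _)
    nlinarith [norm_nonneg (q - P q)]
  have hqC : q ∈ C := by
    have : q - P q = 0 := norm_eq_zero.mp hdq
    have hqP : q = P q := by rwa [sub_eq_zero] at this
    rw [hqP]; exact (hP q).1
  -- ‖q - y‖ ≤ ‖P y - y‖ and ≥, hence equal
  have hle : ‖q - y‖ ^ 2 ≤ ‖P y - y‖ ^ 2 := by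
    have := hq (P y)
    rw [hg' q, hg' (P y), hdq, hdPy] at this
    linarith
  have hge : ‖y - P y‖ ≤ ‖y - q‖ := (hP y).2 q hqC
  have heq : ‖q - y‖ = ‖P y - y‖ := by
    have h3 : ‖P y - y‖ ≤ ‖q - y‖ := by
      rw [norm_sub_rev, norm_sub_rev q y]; exact hge
    nlinarith [norm_nonneg (q - y), norm_nonneg (P y - y)]
  -- strict convexity: midpoint
  by_contra hne
  set m : EuclideanSpace ℝ (Fin M) := (1/2 : ℝ) • q + (1/2 : ℝ) • P y with hm
  have hmC : m ∈ C := hCcv hqC (hP y).1 (by norm_num) (by norm_num) (by norm_num)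
  have hym : y - m = (1/2 : ℝ) • ((y - q) + (y - P y)) := by
    rw [hm]
    module
  have hmnorm : ‖y - m‖ = ‖(y - q) + (y - P y)‖ / 2 := by
    rw [hym, norm_smul]
    simp
    ring
  have hpar : ‖(y - q) + (y - P y)‖ ^ 2 + ‖(y - q) - (y - P y)‖ ^ 2
      = 2 * ‖y - q‖ ^ 2 + 2 * ‖y - P y‖ ^ 2 := by
    have h := parallelogram_law_with_norm ℝ (y - q) (y - P y)
    simp only [pow_two]
    linarith
  have hdiff : (y - q) - (y - P y) = P y - q := by abel
  have hgem : ‖y - P y‖ ≤ ‖y - m‖ := (hP y).2 m hmC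
  have hqPy : ‖P y - q‖ ^ 2 ≤ 0 := by
    rw [hdiff] at hpar
    have heq' : ‖y - q‖ = ‖y - P y‖ := by
      rw [norm_sub_rev, norm_sub_rev y (P y)]; exact heq
    have h4 : ‖(y - q) + (y - P y)‖ = 2 * ‖y - m‖ := by rw [hmnorm]; ring
    have h5 : ‖y - P y‖ ^ 2 ≤ ‖y - m‖ ^ 2 :=
      pow_le_pow_left₀ (norm_nonneg _) hgem 2
    rw [h4, heq'] at hpar
    nlinarith [h5, hpar]
  have : P y - q = 0 := by
    have := le_antisymm hqPy (sq_nonneg _)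
    have h0 : ‖P y - q‖ = 0 := by nlinarith [norm_nonneg (P y - q)]
    exact norm_eq_zero.mp h0
  exact hne (by rw [← sub_eq_zero]; rw [← neg_sub]; simp [this])
end

section
/- Let M ≥ 1, let τ_1,…,τ_M > 0, let y = (y_1,…,y_M) ∈ ℝ^M, set ν_m = |y_m|/τ_m for m ∈ {1,…,M} and assume ν_1 ≤ ν_2 ≤ ⋯ ≤ ν_M; set ν_0 = −∞ and ν_{M+1} = +∞. Then for every ζ ∈ ℝ there exists a unique integer m̄ ∈ {1,…,M+1} such that ν_{m̄−1} < (ζ + Σ_{m=m̄}^{M} ν_m τ_m²) / (1 + Σ_{m=m̄}^{M} τ_m²) ≤ ν_{m̄}. -/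
open scoped BigOperators

noncomputable def gfun13 (M : ℕ) (τ ν : ℕ → ℝ) (ζ : ℝ) (k : ℕ) : ℝ :=
  (ζ + ∑ m ∈ Finset.Icc k M, ν m * τ m ^ 2) / (1 + ∑ m ∈ Finset.Icc k M, τ m ^ 2)

lemma gfun13_iff (M : ℕ) (τ ν : ℕ → ℝ) (hτ : ∀ m ∈ Finset.Icc 1 M, 0 < τ m)
    (ζ : ℝ) {k : ℕ} (hk1 : 1 ≤ k) (hkM : k ≤ M) :
    (gfun13 M τ ν ζ k ≤ ν k ↔ gfun13 M τ ν ζ (k + 1) ≤ ν k) := by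
  have hsplit : ∀ f : ℕ → ℝ,
      ∑ m ∈ Finset.Icc k M, f m = f k + ∑ m ∈ Finset.Icc (k + 1) M, f m := by
    intro f
    rw [Finset.Icc_eq_cons_Ioc hkM, Finset.sum_cons, ← Finset.Icc_add_one_left_eq_Ioc]
  have hw : 0 < τ k ^ 2 := pow_pos (hτ k (Finset.mem_Icc.mpr ⟨hk1, hkM⟩)) 2
  have hB : 0 < 1 + ∑ m ∈ Finset.Icc (k + 1) M, τ m ^ 2 := by
    have : (0:ℝ) ≤ ∑ m ∈ Finset.Icc (k + 1) M, τ m ^ 2 :=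
      Finset.sum_nonneg fun i _ => sq_nonneg _
    linarith
  unfold gfun13
  rw [hsplit (fun m => ν m * τ m ^ 2), hsplit (fun m => τ m ^ 2)]
  have hB2 : 0 < 1 + (τ k ^ 2 + ∑ m ∈ Finset.Icc (k + 1) M, τ m ^ 2) := by linarith
  rw [div_le_iff₀ hB2, div_le_iff₀ hB]
  constructor <;> intro h <;> nlinarith

/-- **Existence and uniqueness of the breakpoint index `m̄`.**
Given `M ≥ 1`, positive weights `τ_1, …, τ_M`, values `ν_m = |y_m|/τ_m` sorted in
ascending order (with the conventions `ν_0 = −∞` and `ν_{M+1} = +∞`, encoded by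
dropping the corresponding inequality), for every `ζ ∈ ℝ` there is a unique
`m̄ ∈ {1, …, M+1}` such that
`ν_{m̄−1} < (ζ + ∑_{m=m̄}^{M} ν_m τ_m²)/(1 + ∑_{m=m̄}^{M} τ_m²) ≤ ν_{m̄}`
(empty sums being `0`). -/
theorem stmt13 (M : ℕ) (hM : 1 ≤ M) (τ y ν : ℕ → ℝ)
    (hτ : ∀ m ∈ Finset.Icc 1 M, 0 < τ m)
    (hν : ∀ m ∈ Finset.Icc 1 M, ν m = |y m| / τ m)
    (hsorted : ∀ m, 1 ≤ m → m < M → ν m ≤ ν (m + 1))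
    (ζ : ℝ) :
    ∃! mbar : ℕ, mbar ∈ Finset.Icc 1 (M + 1) ∧
      (mbar = 1 ∨
        ν (mbar - 1) <
          (ζ + ∑ m ∈ Finset.Icc mbar M, ν m * τ m ^ 2) /
            (1 + ∑ m ∈ Finset.Icc mbar M, τ m ^ 2)) ∧
      (mbar = M + 1 ∨
        (ζ + ∑ m ∈ Finset.Icc mbar M, ν m * τ m ^ 2) /
            (1 + ∑ m ∈ Finset.Icc mbar M, τ m ^ 2) ≤ ν mbar) := by
  classical
  show ∃! mbar : ℕ, mbar ∈ Finset.Icc 1 (M + 1) ∧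
      (mbar = 1 ∨ ν (mbar - 1) < gfun13 M τ ν ζ mbar) ∧
      (mbar = M + 1 ∨ gfun13 M τ ν ζ mbar ≤ ν mbar)
  have hQ : ∃ n, (1 ≤ n ∧ n ≤ M + 1) ∧ (n = M + 1 ∨ gfun13 M τ ν ζ n ≤ ν n) :=
    ⟨M + 1, ⟨by omega, le_rfl⟩, Or.inl rfl⟩
  set mb := Nat.find hQ with hmb
  obtain ⟨⟨h1, h2⟩, hU⟩ := Nat.find_spec hQ
  have hmin : ∀ k, k < mb → ¬((1 ≤ k ∧ k ≤ M + 1) ∧ (k = M + 1 ∨ gfun13 M τ ν ζ k ≤ ν k)) :=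
    fun k hk => Nat.find_min hQ hk
  refine ⟨mb, ⟨Finset.mem_Icc.mpr ⟨h1, h2⟩, ?_, hU⟩, ?_⟩
  · -- lower bound
    by_cases hmb1 : mb = 1
    · exact Or.inl hmb1
    · right
      have hge2 : 2 ≤ mb := by omega
      have hnot := hmin (mb - 1) (by omega)
      have hcond : 1 ≤ mb - 1 ∧ mb - 1 ≤ M + 1 := ⟨by omega, by omega⟩
      have hP : ¬(mb - 1 = M + 1 ∨ gfun13 M τ ν ζ (mb - 1) ≤ ν (mb - 1)) := by
        intro h; exact hnot ⟨hcond, h⟩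
      push_neg at hP
      have hlt : ν (mb - 1) < gfun13 M τ ν ζ (mb - 1) := hP.2
      have hkM : mb - 1 ≤ M := by omega
      have hiff := gfun13_iff M τ ν hτ ζ (k := mb - 1) (by omega) hkM
      rw [show mb - 1 + 1 = mb by omega] at hiff
      by_contra hcon
      push_neg at hcon
      exact absurd (hiff.mpr hcon) (not_le.mpr hlt)
  · -- uniqueness
    rintro n ⟨hnmem, hnL, hnU⟩
    rw [Finset.mem_Icc] at hnmem
    by_contra hne
    rcases lt_or_gt_of_ne hne with hlt | hgt
    · -- n < mb : contradicts minimality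
      exact hmin n hlt ⟨hnmem, hnU⟩
    · -- mb < n
      have hmbM : mb ≤ M := by omega
      have hUmb : gfun13 M τ ν ζ mb ≤ ν mb := by
        rcases hU with h | h
        · omega
        · exact h
      have chain : ∀ k, mb ≤ k → k ≤ M → gfun13 M τ ν ζ (k + 1) ≤ ν k := by
        intro k
        induction k with
        | zero => intro h0 _; omega
        | succ k ih =>
          intro hmbk hkM
          rcases eq_or_lt_of_le hmbk with heq | hlt'
          · have := (gfun13_iff M τ ν hτ ζ (k := k + 1) (by omega) hkM).mp
            rw [← heq]
            exact (heq ▸ this) (heq ▸ hUmb)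
          · have hmbk' : mb ≤ k := by omega
            have h1k : 1 ≤ k := by omega
            have hkM' : k ≤ M := by omega
            have hprev := ih hmbk' hkM'
            have hmono : ν k ≤ ν (k + 1) := hsorted k h1k (by omega)
            have : gfun13 M τ ν ζ (k + 1) ≤ ν (k + 1) := le_trans hprev hmono
            exact (gfun13_iff M τ ν hτ ζ (k := k + 1) (by omega) hkM).mp this
      have hn2 : 2 ≤ n := by omega
      have hc := chain (n - 1) (by omega) (by omega)
      rw [show n - 1 + 1 = n by omega] at hc
      rcases hnL with h | h
      · omega
      · linarith
end

section
/- Let M ≥ 1, let τ_1,…,τ_M > 0, and define h : ℝ^M → ℝ by h(y) = max{|y_m|/τ_m : 1 ≤ m ≤ M}. Let y ∈ ℝ^M, set ν_m = |y_m|/τ_m and assume ν_1 ≤ ⋯ ≤ ν_M; set ν_0 = −∞, ν_{M+1} = +∞. Let ζ ∈ ℝ and let m̄ ∈ {1,…,M+1} be the unique integer with ν_{m̄−1} < (ζ + Σ_{m=m̄}^{M} ν_m τ_m²)/(1 + Σ_{m=m̄}^{M} τ_m²) ≤ ν_{m̄}. Then the metric projection (p,θ) of (y,ζ) onto epi h (with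 the product norm on ℝ^M × ℝ) is given by θ = max(ζ + Σ_{m=m̄}^{M} ν_m τ_m², 0)/(1 + Σ_{m=m̄}^{M} τ_m²), and for every m ∈ {1,…,M}: p_m = y_m if |y_m| ≤ τ_m θ, p_m = τ_m θ if y_m > τ_m θ, and p_m = −τ_m θ if y_m < −τ_m θ. -/
open scoped BigOperators

set_option maxHeartbeats 1000000 in
/-- **Closed form of the projection onto the epigraph of a weighted `ℓ∞`-norm.**
`h(y) = max_{1 ≤ m ≤ M} |y_m|/τ_m` on `ℝ^M` (coordinates indexed by
`{1, …, M}`), with the Euclidean product norm on `ℝ^M × ℝ` (distances written as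
`√(∑(·)² + (·)²)`).  With `ν_m = |y_m|/τ_m` sorted in ascending order,
conventions `ν_0 = −∞`, `ν_{M+1} = +∞`, and `m̄` the unique index in
`{1, …, M+1}` satisfying the bracketing inequalities, the metric projection
`(p,θ)` of `(y,ζ)` onto `epi h` satisfies
`θ = max(ζ + ∑_{m=m̄}^{M} ν_m τ_m², 0)/(1 + ∑_{m=m̄}^{M} τ_m²)` and, for every
`m ∈ {1, …, M}`, `p_m = y_m` if `|y_m| ≤ τ_m θ`, `p_m = τ_m θ` if `y_m > τ_m θ`,
and `p_m = −τ_m θ` if `y_m < −τ_m θ`. -/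
theorem stmt14 (M : ℕ) (hM : 1 ≤ M) (τ y ν : ℕ → ℝ)
    (hτ : ∀ m ∈ Finset.Icc 1 M, 0 < τ m)
    (hν : ∀ m ∈ Finset.Icc 1 M, ν m = |y m| / τ m)
    (hsorted : ∀ m, 1 ≤ m → m < M → ν m ≤ ν (m + 1))
    (h : (ℕ → ℝ) → ℝ)
    (hh : ∀ v : ℕ → ℝ,
      h v = (Finset.Icc 1 M).sup' (Finset.nonempty_Icc.mpr hM)
        (fun m => |v m| / τ m))
    (ζ : ℝ) (mbar : ℕ)
    (hmbar₀ : mbar ∈ Finset.Icc 1 (M + 1))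
    (hmbar₁ : mbar = 1 ∨
      ν (mbar - 1) <
        (ζ + ∑ m ∈ Finset.Icc mbar M, ν m * τ m ^ 2) /
          (1 + ∑ m ∈ Finset.Icc mbar M, τ m ^ 2))
    (hmbar₂ : mbar = M + 1 ∨
      (ζ + ∑ m ∈ Finset.Icc mbar M, ν m * τ m ^ 2) /
          (1 + ∑ m ∈ Finset.Icc mbar M, τ m ^ 2) ≤ ν mbar)
    (p : ℕ → ℝ) (θ : ℝ)
    (hfeas : h p ≤ θ)
    (hmin : ∀ (u : ℕ → ℝ) (ξ : ℝ), h u ≤ ξ →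
      Real.sqrt ((∑ m ∈ Finset.Icc 1 M, (p m - y m) ^ 2) + (θ - ζ) ^ 2) ≤
        Real.sqrt ((∑ m ∈ Finset.Icc 1 M, (u m - y m) ^ 2) + (ξ - ζ) ^ 2)) :
    θ = max (ζ + ∑ m ∈ Finset.Icc mbar M, ν m * τ m ^ 2) 0 /
        (1 + ∑ m ∈ Finset.Icc mbar M, τ m ^ 2) ∧
    ∀ m ∈ Finset.Icc 1 M,
      (|y m| ≤ τ m * θ → p m = y m) ∧
      (τ m * θ < y m → p m = τ m * θ) ∧
      (y m < -(τ m * θ) → p m = -(τ m * θ)) := by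
  classical
  have hmbar_lb : 1 ≤ mbar := (Finset.mem_Icc.mp hmbar₀).1
  have hmbar_ub : mbar ≤ M + 1 := (Finset.mem_Icc.mp hmbar₀).2
  set S := Finset.Icc 1 M with hS
  obtain ⟨A, hAdef⟩ : ∃ a : ℝ, a = ζ + ∑ m ∈ Finset.Icc mbar M, ν m * τ m ^ 2 := ⟨_, rfl⟩
  obtain ⟨B, hBdef⟩ : ∃ b : ℝ, b = 1 + ∑ m ∈ Finset.Icc mbar M, τ m ^ 2 := ⟨_, rfl⟩
  rw [← hAdef, ← hBdef] at hmbar₁ hmbar₂ ⊢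
  have hBpos : 0 < B := by
    have h1 : 0 ≤ ∑ m ∈ Finset.Icc mbar M, τ m ^ 2 :=
      Finset.sum_nonneg fun m _ => sq_nonneg _
    rw [hBdef]; linarith
  obtain ⟨θ0, hθ0def⟩ : ∃ t : ℝ, t = max A 0 / B := ⟨_, rfl⟩
  rw [← hθ0def]
  have hθ0nn : 0 ≤ θ0 := by rw [hθ0def]; exact div_nonneg (le_max_right _ _) hBpos.le
  obtain ⟨p0, hp0⟩ : ∃ q : ℕ → ℝ, ∀ m, q m = max (-(τ m * θ0)) (min (τ m * θ0) (y m)) :=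
    ⟨_, fun _ => rfl⟩
  have hνnn : ∀ m ∈ S, 0 ≤ ν m := by
    intro m hm
    rw [hν m hm]
    exact div_nonneg (abs_nonneg _) (hτ m hm).le
  -- monotonicity of ν
  have mono : ∀ j i : ℕ, 1 ≤ i → i ≤ j → j ≤ M → ν i ≤ ν j := by
    intro j
    induction j with
    | zero => intro i h1 h2 _; exfalso; omega
    | succ n ih =>
      intro i h1 h2 hM'
      rcases Nat.eq_or_lt_of_le h2 with hcase | hcase
      · exact hcase ▸ le_rfl
      · have hi : i ≤ n := Nat.lt_succ_iff.mp hcase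
        have h1n : 1 ≤ n := le_trans h1 hi
        exact le_trans (ih i h1 hi (by omega)) (hsorted n h1n (by omega))
  -- bounds for feasible points
  have hfeas_bound : ∀ (u : ℕ → ℝ) (ξ : ℝ), h u ≤ ξ →
      0 ≤ ξ ∧ ∀ m ∈ S, |u m| ≤ τ m * ξ := by
    intro u ξ hu
    have hm1 : (1 : ℕ) ∈ S := by rw [hS]; exact Finset.mem_Icc.mpr ⟨le_refl 1, hM⟩
    have hsup : ∀ m ∈ S, |u m| / τ m ≤ ξ := by
      intro m hm
      refine le_trans ?_ hu
      rw [hh u]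
      exact Finset.le_sup' (fun m => |u m| / τ m) hm
    have hξ : 0 ≤ ξ := le_trans (div_nonneg (abs_nonneg _) (hτ 1 hm1).le) (hsup 1 hm1)
    refine ⟨hξ, fun m hm => ?_⟩
    have h2 := hsup m hm
    rw [div_le_iff₀ (hτ m hm)] at h2
    linarith [h2]
  -- |p0| bound and feasibility
  have hp0_abs : ∀ m ∈ S, |p0 m| ≤ τ m * θ0 := by
    intro m hm
    have ha : 0 ≤ τ m * θ0 := mul_nonneg (hτ m hm).le hθ0nn
    rw [hp0 m, abs_le]
    exact ⟨le_max_left _ _, max_le (by linarith) (min_le_left _ _)⟩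
  have hfeas0 : h p0 ≤ θ0 := by
    rw [hh p0]
    apply Finset.sup'_le
    intro m hm
    rw [div_le_iff₀ (hτ m hm)]
    have := hp0_abs m hm
    linarith
  -- key structural dichotomy for the constant C
  have hCkey : (∑ m ∈ S, τ m ^ 2 * max (ν m - θ0) 0) + (ζ - θ0) = 0 ∨
      ((∑ m ∈ S, τ m ^ 2 * max (ν m - θ0) 0) + (ζ - θ0) ≤ 0 ∧ θ0 = 0) := by
    rcases lt_or_ge 0 A with hApos | hA0
    · left
      have hθ0A : θ0 = A / B := by rw [hθ0def, max_eq_left hApos.le]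
      have hAB : θ0 * B = A := by rw [hθ0A, div_mul_cancel₀ _ hBpos.ne']
      have hsplit : ∑ m ∈ S, τ m ^ 2 * max (ν m - θ0) 0 =
          ∑ m ∈ Finset.Icc mbar M, τ m ^ 2 * (ν m - θ0) := by
        have hun : Finset.Ico 1 mbar ∪ Finset.Ico mbar (M + 1) = Finset.Ico 1 (M + 1) :=
          Finset.Ico_union_Ico_eq_Ico hmbar_lb hmbar_ub
        have hdisj : Disjoint (Finset.Ico 1 mbar) (Finset.Ico mbar (M + 1)) :=
          Finset.Ico_disjoint_Ico_consecutive 1 mbar (M + 1)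
        rw [hS, ← Finset.Ico_add_one_right_eq_Icc, ← hun, Finset.sum_union hdisj]
        have h0 : ∑ m ∈ Finset.Ico 1 mbar, τ m ^ 2 * max (ν m - θ0) 0 = 0 := by
          apply Finset.sum_eq_zero
          intro m hm
          obtain ⟨h1m, h2m⟩ := Finset.mem_Ico.mp hm
          have hm2 : mbar ≠ 1 := by omega
          have hlt : ν (mbar - 1) < A / B := hmbar₁.resolve_left hm2
          have hmono : ν m ≤ ν (mbar - 1) := mono (mbar - 1) m h1m (by omega) (by omega)
          have hle : ν m - θ0 ≤ 0 := by rw [hθ0A]; linarith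
          rw [max_eq_right hle, mul_zero]
        have h2 : ∑ m ∈ Finset.Ico mbar (M + 1), τ m ^ 2 * max (ν m - θ0) 0 =
            ∑ m ∈ Finset.Icc mbar M, τ m ^ 2 * (ν m - θ0) := by
          rw [Finset.Ico_add_one_right_eq_Icc]
          refine Finset.sum_congr rfl fun m hm => ?_
          obtain ⟨h1m, h2m⟩ := Finset.mem_Icc.mp hm
          have hne : mbar ≠ M + 1 := by omega
          have hub2 : A / B ≤ ν mbar := hmbar₂.resolve_left hne
          have hmono : ν mbar ≤ ν m := mono m mbar hmbar_lb h1m h2m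
          have hge : 0 ≤ ν m - θ0 := by rw [hθ0A]; linarith
          rw [max_eq_left hge]
        rw [h0, h2, zero_add]
      rw [hsplit]
      have e1 : ∑ m ∈ Finset.Icc mbar M, τ m ^ 2 * (ν m - θ0) =
          (∑ m ∈ Finset.Icc mbar M, ν m * τ m ^ 2) -
            (∑ m ∈ Finset.Icc mbar M, τ m ^ 2) * θ0 := by
        rw [Finset.sum_mul, ← Finset.sum_sub_distrib]
        exact Finset.sum_congr rfl fun m _ => by ring
      rw [e1]
      rw [hAdef] at hAB
      rw [hBdef] at hAB
      linarith [hAB]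
    · right
      have hθ00 : θ0 = 0 := by rw [hθ0def, max_eq_right hA0, zero_div]
      have hm1 : mbar = 1 := by
        by_contra hne
        have hlt : ν (mbar - 1) < A / B := hmbar₁.resolve_left hne
        have hmem : mbar - 1 ∈ S := by rw [hS]; exact Finset.mem_Icc.mpr ⟨by omega, by omega⟩
        have hnn := hνnn _ hmem
        have hAB : A / B ≤ 0 := div_nonpos_of_nonpos_of_nonneg hA0 hBpos.le
        linarith
      refine ⟨?_, hθ00⟩
      have e2 : ∑ m ∈ S, τ m ^ 2 * max (ν m - θ0) 0 = ∑ m ∈ S, ν m * τ m ^ 2 := by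
        refine Finset.sum_congr rfl fun m hm => ?_
        rw [hθ00, sub_zero, max_eq_left (hνnn m hm)]
        ring
      rw [e2, hθ00]
      rw [hm1, ← hS] at hAdef
      rw [hAdef] at hA0
      linarith
  -- the variational inequality
  have hIP : ∀ (u : ℕ → ℝ) (ξ : ℝ), h u ≤ ξ →
      (∑ m ∈ S, (y m - p0 m) * (u m - p0 m)) + (ζ - θ0) * (ξ - θ0) ≤ 0 := by
    intro u ξ hu
    obtain ⟨hξnn, hub⟩ := hfeas_bound u ξ hu
    have hterm : ∀ m ∈ S, (y m - p0 m) * (u m - p0 m) ≤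
        τ m ^ 2 * max (ν m - θ0) 0 * (ξ - θ0) := by
      intro m hm
      have hτm := hτ m hm
      have hum := abs_le.mp (hub m hm)
      have hνm : ν m = |y m| / τ m := hν m hm
      have hνy : τ m * ν m = |y m| := by rw [hνm]; field_simp
      have ha : 0 ≤ τ m * θ0 := mul_nonneg hτm.le hθ0nn
      rcases le_or_gt (y m) (τ m * θ0) with h1 | h1
      · rcases le_or_gt (-(τ m * θ0)) (y m) with h2 | h2
        · -- |y m| ≤ τ m θ0 : p0 m = y m
          have hp : p0 m = y m := by
            rw [hp0 m, min_eq_right h1, max_eq_right h2]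
          have habs : |y m| ≤ τ m * θ0 := abs_le.mpr ⟨by linarith, h1⟩
          have hmax : max (ν m - θ0) 0 = 0 := by
            apply max_eq_right
            nlinarith [hνy, habs]
          rw [hp, hmax]
          simp
        · -- y m < -(τ m θ0) : p0 m = -(τ m θ0)
          have hp : p0 m = -(τ m * θ0) := by
            rw [hp0 m, min_eq_right (by linarith : y m ≤ τ m * θ0), max_eq_left h2.le]
          have hyneg : y m < 0 := by linarith
          have hy : y m = -(τ m * ν m) := by
            rw [hνy, abs_of_neg hyneg]; ring
          have hge : 0 ≤ ν m - θ0 := by nlinarith [hy]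
          have hmax : max (ν m - θ0) 0 = ν m - θ0 := max_eq_left hge
          rw [hp, hmax, hy]
          have key : (-(τ m * ν m) + τ m * θ0) * (u m + τ m * ξ) ≤ 0 := by
            apply mul_nonpos_of_nonpos_of_nonneg
            · nlinarith [hy]
            · linarith [hum.1]
          nlinarith [key, sq_nonneg (τ m)]
      · -- τ m θ0 < y m : p0 m = τ m θ0
        have hp : p0 m = τ m * θ0 := by
          rw [hp0 m, min_eq_left h1.le, max_eq_right (by linarith : -(τ m * θ0) ≤ τ m * θ0)]
        have hy : y m = τ m * ν m := by
          rw [hνy, abs_of_pos (by linarith : 0 < y m)]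
        have hge : 0 ≤ ν m - θ0 := by nlinarith [hy]
        have hmax : max (ν m - θ0) 0 = ν m - θ0 := max_eq_left hge
        rw [hp, hmax, hy]
        have key : (τ m * ν m - τ m * θ0) * (u m - τ m * ξ) ≤ 0 := by
          apply mul_nonpos_of_nonneg_of_nonpos
          · nlinarith [hy]
          · linarith [hum.2]
        nlinarith [key, sq_nonneg (τ m)]
    have hsum : (∑ m ∈ S, (y m - p0 m) * (u m - p0 m)) ≤
        (∑ m ∈ S, τ m ^ 2 * max (ν m - θ0) 0) * (ξ - θ0) := by
      rw [Finset.sum_mul]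
      exact Finset.sum_le_sum hterm
    rcases hCkey with hC | ⟨hC, hθ00⟩
    · have hCeq : (∑ m ∈ S, τ m ^ 2 * max (ν m - θ0) 0) = θ0 - ζ := by linarith [hC]
      rw [hCeq] at hsum
      nlinarith [hsum]
    · have hξθ : 0 ≤ ξ - θ0 := by rw [hθ00]; linarith
      have hprod : ((∑ m ∈ S, τ m ^ 2 * max (ν m - θ0) 0) + (ζ - θ0)) * (ξ - θ0) ≤ 0 :=
        mul_nonpos_of_nonpos_of_nonneg hC hξθ
      nlinarith [hsum, hprod]
  -- compare distances
  have hmain := hmin p0 θ0 hfeas0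
  have hDp_nn : 0 ≤ (∑ m ∈ S, (p m - y m) ^ 2) + (θ - ζ) ^ 2 :=
    add_nonneg (Finset.sum_nonneg fun m _ => sq_nonneg _) (sq_nonneg _)
  have hD0_nn : 0 ≤ (∑ m ∈ S, (p0 m - y m) ^ 2) + (θ0 - ζ) ^ 2 :=
    add_nonneg (Finset.sum_nonneg fun m _ => sq_nonneg _) (sq_nonneg _)
  have hle : (∑ m ∈ S, (p m - y m) ^ 2) + (θ - ζ) ^ 2 ≤
      (∑ m ∈ S, (p0 m - y m) ^ 2) + (θ0 - ζ) ^ 2 := by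
    calc (∑ m ∈ S, (p m - y m) ^ 2) + (θ - ζ) ^ 2
        = Real.sqrt ((∑ m ∈ S, (p m - y m) ^ 2) + (θ - ζ) ^ 2) ^ 2 :=
          (Real.sq_sqrt hDp_nn).symm
      _ ≤ Real.sqrt ((∑ m ∈ S, (p0 m - y m) ^ 2) + (θ0 - ζ) ^ 2) ^ 2 :=
          pow_le_pow_left₀ (Real.sqrt_nonneg _) hmain 2
      _ = (∑ m ∈ S, (p0 m - y m) ^ 2) + (θ0 - ζ) ^ 2 := Real.sq_sqrt hD0_nn
  have hIPp := hIP p θ hfeas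
  have hsum_id : ∑ m ∈ S, (p m - y m) ^ 2 =
      (∑ m ∈ S, (p0 m - y m) ^ 2) + (∑ m ∈ S, (p m - p0 m) ^ 2)
        - 2 * ∑ m ∈ S, (y m - p0 m) * (p m - p0 m) := by
    rw [Finset.mul_sum, ← Finset.sum_add_distrib, ← Finset.sum_sub_distrib]
    exact Finset.sum_congr rfl fun m _ => by ring
  have hscal : (θ - ζ) ^ 2 = (θ0 - ζ) ^ 2 + (θ - θ0) ^ 2
      - 2 * ((ζ - θ0) * (θ - θ0)) := by ring
  have hE : (∑ m ∈ S, (p m - p0 m) ^ 2) + (θ - θ0) ^ 2 ≤ 0 := by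
    linarith [hle, hIPp, hsum_id, hscal]
  have hsq_nn : 0 ≤ ∑ m ∈ S, (p m - p0 m) ^ 2 :=
    Finset.sum_nonneg fun m _ => sq_nonneg _
  have hθeq : θ = θ0 := by
    have h1 : (θ - θ0) ^ 2 = 0 := le_antisymm (by linarith) (sq_nonneg _)
    have h2 : θ - θ0 = 0 := by
      exact pow_eq_zero_iff (two_ne_zero) |>.mp h1
    linarith
  have hpeq : ∀ m ∈ S, p m = p0 m := by
    have hz : ∑ m ∈ S, (p m - p0 m) ^ 2 = 0 :=
      le_antisymm (by nlinarith [sq_nonneg (θ - θ0)]) hsq_nn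
    intro m hm
    have h1 := (Finset.sum_eq_zero_iff_of_nonneg (fun m _ => sq_nonneg _)).mp hz m hm
    have h2 : p m - p0 m = 0 := pow_eq_zero_iff (two_ne_zero) |>.mp h1
    linarith
  refine ⟨hθeq, fun m hm => ?_⟩
  have hτm := hτ m hm
  have ha : 0 ≤ τ m * θ0 := mul_nonneg hτm.le hθ0nn
  have hpm := hpeq m hm
  subst hθeq
  refine ⟨?_, ?_, ?_⟩
  · intro habs
    obtain ⟨hl, hr⟩ := abs_le.mp habs
    rw [hpm, hp0 m, min_eq_right hr, max_eq_right hl]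
  · intro hlt
    rw [hpm, hp0 m, min_eq_left hlt.le, max_eq_right (by linarith : -(τ m * θ) ≤ τ m * θ)]
  · intro hlt
    rw [hpm, hp0 m, min_eq_right (by linarith : y m ≤ τ m * θ), max_eq_left hlt.le]
end

section
/- Let M ≥ 1, let τ_1,…,τ_M > 0, and define h : ℝ^M → ℝ by h(y) = max{|y_m|/τ_m : 1 ≤ m ≤ M}. Let (y,ζ) ∈ ℝ^M × ℝ and let (p,θ) be the metric projection of (y,ζ) onto epi h with the product norm on ℝ^M × ℝ. Then θ is the unique minimizer over t ∈ [0,+∞) of (t−ζ)² + Σ_{m=1}^{M} (max{|y_m| − τ_m t, 0})², and for every m ∈ {1,…,M}, p_m is the projection of y_m onto the interval [−τ_m θ, τ_m θ]. -/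
open scoped BigOperators

lemma aux_sq_mid (x z : ℝ) : max ((x+z)/2) 0 ^2 * 2 ≤ max x 0 ^2 + max z 0 ^2 := by
  have ha : x ≤ max x 0 := le_max_left _ _
  have ha0 : (0:ℝ) ≤ max x 0 := le_max_right _ _
  have hb : z ≤ max z 0 := le_max_left _ _
  have hb0 : (0:ℝ) ≤ max z 0 := le_max_right _ _
  have hm : max ((x+z)/2) 0 ≤ (max x 0 + max z 0)/2 := max_le (by linarith) (by linarith)
  have hm0 : (0:ℝ) ≤ max ((x+z)/2) 0 := le_max_right _ _
  nlinarith [sq_nonneg (max x 0 - max z 0)]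

lemma clamp_dist (b q : ℝ) (hb : 0 ≤ b) :
    (max (-b) (min q b) - q)^2 = max (|q| - b) 0 ^2 := by
  rcases le_total q (-b) with h1 | h1
  · rw [min_eq_left (by linarith), max_eq_left h1, abs_of_nonpos (by linarith),
       max_eq_left (by linarith)]
    ring
  · rcases le_total q b with h2 | h2
    · rw [min_eq_left h2, max_eq_right h1,
        max_eq_right (sub_nonpos.mpr (abs_le.mpr ⟨by linarith, h2⟩))]
      ring
    · rw [min_eq_right h2, max_eq_right (by linarith : -b ≤ b),
        abs_of_nonneg (by linarith), max_eq_left (by linarith)]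
      ring

lemma clamp_le (b q r : ℝ) (hb : 0 ≤ b) (hr : |r| ≤ b) :
    (max (-b) (min q b) - q)^2 ≤ (r - q)^2 := by
  have hr1 : -b ≤ r := neg_le_of_abs_le hr
  have hr2 : r ≤ b := le_of_abs_le hr
  rcases le_total q (-b) with h1 | h1
  · rw [min_eq_left (by linarith), max_eq_left h1]; nlinarith
  · rcases le_total q b with h2 | h2
    · rw [min_eq_left h2, max_eq_right h1]; nlinarith [sq_nonneg (r - q)]
    · rw [min_eq_right h2, max_eq_right (by linarith)]; nlinarith

lemma clamp_uniq (b q r : ℝ) (hb : 0 ≤ b) (hr : |r| ≤ b)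
    (he : (r - q)^2 = (max (-b) (min q b) - q)^2) :
    r = max (-b) (min q b) := by
  have hr1 : -b ≤ r := neg_le_of_abs_le hr
  have hr2 : r ≤ b := le_of_abs_le hr
  rcases le_total q (-b) with h1 | h1
  · rw [min_eq_left (by linarith), max_eq_left h1] at he ⊢; nlinarith
  · rcases le_total q b with h2 | h2
    · rw [min_eq_left h2, max_eq_right h1] at he ⊢; nlinarith
    · rw [min_eq_right h2, max_eq_right (by linarith)] at he ⊢; nlinarith

/-- **Variational characterization of the projection onto the epigraph of a
weighted `ℓ∞`-norm.**  `h(y) = max_{1 ≤ m ≤ M} |y_m|/τ_m` on `ℝ^M` (coordinates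
indexed by `{1, …, M}`), with the Euclidean product norm on `ℝ^M × ℝ` (distances
written as `√(∑(·)² + (·)²)`).  If `(p,θ)` is the metric projection of `(y,ζ)`
onto `epi h`, then `θ` is the unique minimizer over `t ∈ [0,+∞)` of
`(t − ζ)² + ∑_{m=1}^{M} (max{|y_m| − τ_m t, 0})²`, and each `p_m` is the
projection of `y_m` onto the interval `[−τ_m θ, τ_m θ]`. -/
theorem stmt15 (M : ℕ) (hM : 1 ≤ M) (τ : ℕ → ℝ)
    (hτ : ∀ m ∈ Finset.Icc 1 M, 0 < τ m)
    (h : (ℕ → ℝ) → ℝ)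
    (hh : ∀ v : ℕ → ℝ,
      h v = (Finset.Icc 1 M).sup' (Finset.nonempty_Icc.mpr hM) (fun m => |v m| / τ m))
    (y : ℕ → ℝ) (ζ : ℝ) (p : ℕ → ℝ) (θ : ℝ)
    (hfeas : h p ≤ θ)
    (hmin : ∀ (u : ℕ → ℝ) (ξ : ℝ), h u ≤ ξ →
      Real.sqrt ((∑ m ∈ Finset.Icc 1 M, (p m - y m) ^ 2) + (θ - ζ) ^ 2) ≤
        Real.sqrt ((∑ m ∈ Finset.Icc 1 M, (u m - y m) ^ 2) + (ξ - ζ) ^ 2)) :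
    0 ≤ θ ∧
    (∀ t : ℝ, 0 ≤ t →
      (θ - ζ) ^ 2 + ∑ m ∈ Finset.Icc 1 M, (max (|y m| - τ m * θ) 0) ^ 2 ≤
        (t - ζ) ^ 2 + ∑ m ∈ Finset.Icc 1 M, (max (|y m| - τ m * t) 0) ^ 2) ∧
    (∀ t : ℝ, 0 ≤ t →
      (∀ s : ℝ, 0 ≤ s →
        (t - ζ) ^ 2 + ∑ m ∈ Finset.Icc 1 M, (max (|y m| - τ m * t) 0) ^ 2 ≤
          (s - ζ) ^ 2 + ∑ m ∈ Finset.Icc 1 M, (max (|y m| - τ m * s) 0) ^ 2) →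
      t = θ) ∧
    ∀ m ∈ Finset.Icc 1 M, p m = max (-(τ m * θ)) (min (y m) (τ m * θ)) := by
  have h1M : 1 ∈ Finset.Icc 1 M := Finset.mem_Icc.mpr ⟨le_refl 1, hM⟩
  have hfeas' : (Finset.Icc 1 M).sup' (Finset.nonempty_Icc.mpr hM)
      (fun m => |p m| / τ m) ≤ θ := by rw [hh] at hfeas; exact hfeas
  -- θ ≥ 0
  have hθ0 : 0 ≤ θ := by
    have h2 : |p 1| / τ 1 ≤ θ :=
      le_trans (Finset.le_sup' (fun m => |p m| / τ m) h1M) hfeas'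
    exact le_trans (div_nonneg (abs_nonneg _) (hτ 1 h1M).le) h2
  -- coordinates of p are bounded
  have hpm : ∀ m ∈ Finset.Icc 1 M, |p m| ≤ τ m * θ := by
    intro m hm
    have h2 : |p m| / τ m ≤ θ :=
      le_trans (Finset.le_sup' (fun m => |p m| / τ m) hm) hfeas'
    have h3 := (div_le_iff₀ (hτ m hm)).mp h2
    have h4 : θ * τ m = τ m * θ := mul_comm _ _
    linarith
  -- clamp function
  set c : ℝ → ℕ → ℝ := fun t m => max (-(τ m * t)) (min (y m) (τ m * t)) with hc
  have hcb : ∀ t : ℝ, 0 ≤ t → ∀ m ∈ Finset.Icc 1 M, |c t m| ≤ τ m * t := by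
    intro t ht m hm
    have hb : 0 ≤ τ m * t := mul_nonneg (hτ m hm).le ht
    rw [abs_le]
    exact ⟨le_max_left _ _, max_le (by linarith) (min_le_right _ _)⟩
  have hfc : ∀ t : ℝ, 0 ≤ t → h (c t) ≤ t := by
    intro t ht
    rw [hh]
    apply Finset.sup'_le
    intro m hm
    rw [div_le_iff₀ (hτ m hm)]
    have := hcb t ht m hm
    have h4 : t * τ m = τ m * t := mul_comm _ _
    linarith
  -- squared distance minimality
  have hsq : ∀ (u : ℕ → ℝ) (ξ : ℝ), h u ≤ ξ →
      (∑ m ∈ Finset.Icc 1 M, (p m - y m) ^ 2) + (θ - ζ) ^ 2 ≤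
        (∑ m ∈ Finset.Icc 1 M, (u m - y m) ^ 2) + (ξ - ζ) ^ 2 := by
    intro u ξ hu
    have h0 : 0 ≤ (∑ m ∈ Finset.Icc 1 M, (p m - y m) ^ 2) + (θ - ζ) ^ 2 :=
      add_nonneg (Finset.sum_nonneg fun m _ => sq_nonneg _) (sq_nonneg _)
    have h0' : 0 ≤ (∑ m ∈ Finset.Icc 1 M, (u m - y m) ^ 2) + (ξ - ζ) ^ 2 :=
      add_nonneg (Finset.sum_nonneg fun m _ => sq_nonneg _) (sq_nonneg _)
    calc (∑ m ∈ Finset.Icc 1 M, (p m - y m) ^ 2) + (θ - ζ) ^ 2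
        = Real.sqrt ((∑ m ∈ Finset.Icc 1 M, (p m - y m) ^ 2) + (θ - ζ) ^ 2) ^ 2 :=
          (Real.sq_sqrt h0).symm
      _ ≤ Real.sqrt ((∑ m ∈ Finset.Icc 1 M, (u m - y m) ^ 2) + (ξ - ζ) ^ 2) ^ 2 :=
          pow_le_pow_left₀ (Real.sqrt_nonneg _) (hmin u ξ hu) 2
      _ = (∑ m ∈ Finset.Icc 1 M, (u m - y m) ^ 2) + (ξ - ζ) ^ 2 := Real.sq_sqrt h0'
  have hsum_c : ∀ t : ℝ, 0 ≤ t →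
      ∑ m ∈ Finset.Icc 1 M, (c t m - y m) ^ 2 =
        ∑ m ∈ Finset.Icc 1 M, (max (|y m| - τ m * t) 0) ^ 2 :=
    fun t ht => Finset.sum_congr rfl fun m hm =>
      clamp_dist _ _ (mul_nonneg (hτ m hm).le ht)
  have hD_le : ∀ t : ℝ, 0 ≤ t →
      (∑ m ∈ Finset.Icc 1 M, (p m - y m) ^ 2) + (θ - ζ) ^ 2 ≤
        (t - ζ) ^ 2 + ∑ m ∈ Finset.Icc 1 M, (max (|y m| - τ m * t) 0) ^ 2 := by
    intro t ht
    have h5 := hsq (c t) t (hfc t ht)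
    rw [hsum_c t ht] at h5
    linarith
  have hsum_le : ∑ m ∈ Finset.Icc 1 M, (c θ m - y m) ^ 2 ≤
      ∑ m ∈ Finset.Icc 1 M, (p m - y m) ^ 2 := by
    apply Finset.sum_le_sum
    intro m hm
    exact clamp_le _ _ _ (mul_nonneg (hτ m hm).le hθ0) (hpm m hm)
  have hF_le : (θ - ζ) ^ 2 + ∑ m ∈ Finset.Icc 1 M, (max (|y m| - τ m * θ) 0) ^ 2 ≤
      (∑ m ∈ Finset.Icc 1 M, (p m - y m) ^ 2) + (θ - ζ) ^ 2 := by
    have := hsum_le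
    rw [hsum_c θ hθ0] at this
    linarith
  have part2 : ∀ t : ℝ, 0 ≤ t →
      (θ - ζ) ^ 2 + ∑ m ∈ Finset.Icc 1 M, (max (|y m| - τ m * θ) 0) ^ 2 ≤
        (t - ζ) ^ 2 + ∑ m ∈ Finset.Icc 1 M, (max (|y m| - τ m * t) 0) ^ 2 :=
    fun t ht => le_trans hF_le (hD_le t ht)
  refine ⟨hθ0, part2, ?_, ?_⟩
  · -- uniqueness
    intro t ht hts
    set s := (t + θ) / 2 with hs
    have hs0 : 0 ≤ s := by simp only [hs]; linarith
    have h1 := hts θ hθ0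
    have h2 := part2 t ht
    have h3 := hts s hs0
    have h4 := part2 s hs0
    have hsum2 : (∑ m ∈ Finset.Icc 1 M, (max (|y m| - τ m * s) 0) ^ 2) * 2 ≤
        (∑ m ∈ Finset.Icc 1 M, (max (|y m| - τ m * t) 0) ^ 2) +
          ∑ m ∈ Finset.Icc 1 M, (max (|y m| - τ m * θ) 0) ^ 2 := by
      rw [Finset.sum_mul, ← Finset.sum_add_distrib]
      apply Finset.sum_le_sum
      intro m hm
      have e : |y m| - τ m * s = ((|y m| - τ m * t) + (|y m| - τ m * θ)) / 2 := by
        simp only [hs]; ring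
      rw [e]
      exact aux_sq_mid _ _
    have hmid : (s - ζ) ^ 2 * 2 = (t - ζ) ^ 2 + (θ - ζ) ^ 2 - (t - θ) ^ 2 / 2 := by
      simp only [hs]; ring
    have h5 : (t - θ) ^ 2 ≤ 0 := by nlinarith
    have h6 : (t - θ) ^ 2 = 0 := le_antisymm h5 (sq_nonneg _)
    have h7 : t - θ = 0 := by
      exact pow_eq_zero_iff (n := 2) (by norm_num) |>.mp h6
    linarith
  · -- coordinates of p
    have hle2 : ∑ m ∈ Finset.Icc 1 M, (p m - y m) ^ 2 ≤
        ∑ m ∈ Finset.Icc 1 M, (c θ m - y m) ^ 2 := by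
      have := hD_le θ hθ0
      rw [← hsum_c θ hθ0] at this
      linarith
    have heq : ∑ m ∈ Finset.Icc 1 M, (c θ m - y m) ^ 2 =
        ∑ m ∈ Finset.Icc 1 M, (p m - y m) ^ 2 := le_antisymm hsum_le hle2
    have hterm : ∀ m ∈ Finset.Icc 1 M, (c θ m - y m) ^ 2 = (p m - y m) ^ 2 := by
      intro m hm
      by_contra hne
      have hlt : (c θ m - y m) ^ 2 < (p m - y m) ^ 2 :=
        lt_of_le_of_ne (clamp_le _ _ _ (mul_nonneg (hτ m hm).le hθ0) (hpm m hm)) hne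
      have hstrict : ∑ m ∈ Finset.Icc 1 M, (c θ m - y m) ^ 2 <
          ∑ m ∈ Finset.Icc 1 M, (p m - y m) ^ 2 :=
        Finset.sum_lt_sum
          (fun i hi => clamp_le _ _ _ (mul_nonneg (hτ i hi).le hθ0) (hpm i hi))
          ⟨m, hm, hlt⟩
      linarith
    intro m hm
    exact clamp_uniq _ _ _ (mul_nonneg (hτ m hm).le hθ0) (hpm m hm) (hterm m hm).symm
end

section
/- Let M ≥ 1, let τ_1,…,τ_M > 0 and let ν_1 ≤ ν_2 ≤ ⋯ ≤ ν_M be real numbers; set ν_0 = −∞ and ν_{M+1} = +∞. Define φ : ℝ → ℝ by φ(v) = ½ Σ_{m=1}^{M} (max{τ_m(ν_m − v), 0})². Then φ is a differentiable real-valued convex function and, for every ζ ∈ ℝ, χ = prox_φ(ζ) (the unique minimizer over v ∈ ℝ of ½(v−ζ)² + φ(v)) is characterized as follows: there exists a unique m̄ ∈ {1,…,M+1} such that ν_{m̄−1} < χ ≤ ν_{m̄} and ζ − χ = Σ_{m=m̄}^{M} τ_m² (χ − ν_m). -/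
open scoped BigOperators

/-- Derivative of the positive-part square. -/
lemma posPartSq_hasDerivAt (x : ℝ) :
    HasDerivAt (fun y : ℝ => (max y 0) ^ 2) (2 * max x 0) x := by
  rcases lt_trichotomy x 0 with hx | hx | hx
  · have h : HasDerivAt (fun _ : ℝ => (0 : ℝ)) 0 x := hasDerivAt_const x 0
    have heq : (fun y : ℝ => (max y 0) ^ 2) =ᶠ[nhds x] fun _ => (0 : ℝ) := by
      filter_upwards [Iio_mem_nhds hx] with y hy
      have hy' : y < 0 := hy
      simp [max_eq_right hy'.le]
    have h2 := h.congr_of_eventuallyEq heq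
    simpa [max_eq_right hx.le] using h2
  · subst hx
    rw [hasDerivAt_iff_isLittleO_nhds_zero]
    have hO : (fun h : ℝ => (max (0 + h) 0) ^ 2 - (max (0:ℝ) 0) ^ 2 - h • (2 * max (0:ℝ) 0))
        =O[nhds 0] fun h : ℝ => h ^ 2 := by
      apply Asymptotics.IsBigO.of_bound 1
      filter_upwards with h
      have h1 : |max h 0| ≤ |h| := by
        rcases le_or_gt h 0 with h0 | h0
        · simp [max_eq_right h0]
        · simp [max_eq_left h0.le]
      have h2 : |max h 0| ^ 2 ≤ |h| ^ 2 := by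
        nlinarith [abs_nonneg (max h 0)]
      simp only [zero_add, max_self, smul_eq_mul, mul_zero, sub_zero, norm_pow,
        Real.norm_eq_abs, one_mul, abs_pow]
      simpa [abs_pow] using h2
    have ho : (fun h : ℝ => h ^ 2) =o[nhds 0] (fun h : ℝ => h) := by
      simpa using Asymptotics.isLittleO_pow_id (𝕜 := ℝ) (n := 2) (by norm_num)
    exact hO.trans_isLittleO ho
  · have h : HasDerivAt (fun y : ℝ => y ^ 2) (2 * x) x := by
      simpa using (hasDerivAt_pow 2 x)
    have heq : (fun y : ℝ => (max y 0) ^ 2) =ᶠ[nhds x] fun y => y ^ 2 := by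
      filter_upwards [Ioi_mem_nhds hx] with y hy
      have hy' : 0 < y := hy
      simp [max_eq_left hy'.le]
    have h2 := h.congr_of_eventuallyEq heq
    simpa [max_eq_left hx.le] using h2

/-- Per-term subgradient inequality for `x ↦ (max x 0)^2`. -/
lemma posPartSq_subgrad (a b : ℝ) :
    (max b 0) ^ 2 + 2 * max b 0 * (a - b) ≤ (max a 0) ^ 2 := by
  rcases le_or_gt b 0 with hb | hb
  · rcases le_or_gt a 0 with ha | ha
    · simp [max_eq_right ha, max_eq_right hb]
    · simp only [max_eq_right hb, max_eq_left ha.le]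
      nlinarith
  · rcases le_or_gt a 0 with ha | ha
    · simp only [max_eq_left hb.le, max_eq_right ha]
      nlinarith
    · simp only [max_eq_left hb.le, max_eq_left ha.le]
      nlinarith [sq_nonneg (a - b)]

/-- **Characterization of `prox` of `φ(v) = ½ ∑ (max{τ_m(ν_m − v), 0})²`.**
Given positive `τ_1, …, τ_M` and sorted `ν_1 ≤ ⋯ ≤ ν_M` (with the conventions
`ν_0 = −∞`, `ν_{M+1} = +∞`, encoded by dropping the corresponding inequality),
`φ` is a differentiable real-valued convex function and, for every `ζ`, a point
`χ` is the (unique) minimizer of `v ↦ ½(v − ζ)² + φ(v)` (i.e. `χ = prox_φ(ζ)`)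
iff there is a unique `m̄ ∈ {1, …, M+1}` such that `ν_{m̄−1} < χ ≤ ν_{m̄}` and
`ζ − χ = ∑_{m=m̄}^{M} τ_m²(χ − ν_m)` (empty sums being `0`). -/
theorem stmt16 (M : ℕ) (hM : 1 ≤ M) (τ ν : ℕ → ℝ)
    (hτ : ∀ m ∈ Finset.Icc 1 M, 0 < τ m)
    (hsorted : ∀ m, 1 ≤ m → m < M → ν m ≤ ν (m + 1))
    (φ : ℝ → ℝ)
    (hφ : ∀ v : ℝ, φ v = (∑ m ∈ Finset.Icc 1 M, (max (τ m * (ν m - v)) 0) ^ 2) / 2) :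
    Differentiable ℝ φ ∧ ConvexOn ℝ Set.univ φ ∧
    ∀ ζ χ : ℝ,
      (∀ v : ℝ, (χ - ζ) ^ 2 / 2 + φ χ ≤ (v - ζ) ^ 2 / 2 + φ v) ↔
        (∃! mbar : ℕ, mbar ∈ Finset.Icc 1 (M + 1) ∧
          (mbar = 1 ∨ ν (mbar - 1) < χ) ∧
          (mbar = M + 1 ∨ χ ≤ ν mbar) ∧
          ζ - χ = ∑ m ∈ Finset.Icc mbar M, τ m ^ 2 * (χ - ν m)) := by
  have hphi : φ = fun v => (∑ m ∈ Finset.Icc 1 M, (max (τ m * (ν m - v)) 0) ^ 2) / 2 :=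
    funext hφ
  subst hphi
  -- monotonicity of ν on [1, M]
  have hmono : ∀ a b : ℕ, 1 ≤ a → a ≤ b → b ≤ M → ν a ≤ ν b := by
    intro a b ha hab
    induction b, hab using Nat.le_induction with
    | base => intro _; exact le_refl _
    | succ n hn ih =>
      intro hbM
      exact le_trans (ih (by omega)) (hsorted n (by omega) (by omega))
  -- S χ = ∑ τ² (ν - χ)⁺
  set S : ℝ → ℝ := fun χ => ∑ m ∈ Finset.Icc 1 M, τ m ^ 2 * max (ν m - χ) 0 with hS
  -- derivative of φ
  have hderiv : ∀ x : ℝ, HasDerivAt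
      (fun v => (∑ m ∈ Finset.Icc 1 M, (max (τ m * (ν m - v)) 0) ^ 2) / 2) (-(S x)) x := by
    intro x
    have hterm : ∀ m ∈ Finset.Icc 1 M, HasDerivAt
        (fun v : ℝ => (max (τ m * (ν m - v)) 0) ^ 2)
        (2 * max (τ m * (ν m - x)) 0 * (-(τ m))) x := by
      intro m _
      have hinner : HasDerivAt (fun v : ℝ => τ m * (ν m - v)) (-(τ m)) x := by
        have : HasDerivAt (fun v : ℝ => ν m - v) (-1) x := by
          simpa using ((hasDerivAt_id x).const_sub (ν m))
        simpa using this.const_mul (τ m)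
      exact (posPartSq_hasDerivAt (τ m * (ν m - x))).comp x hinner
    have hsum := HasDerivAt.sum hterm
    have hd := hsum.div_const 2
    convert hd using 1
    · rfl
    · rfl
    · funext v; simp [Finset.sum_apply]
    have e : ∀ m ∈ Finset.Icc 1 M,
        2 * max (τ m * (ν m - x)) 0 * (-(τ m)) = -(τ m ^ 2 * max (ν m - x) 0) * 2 := by
      intro m hm
      have hτm := hτ m hm
      have hmax : max (τ m * (ν m - x)) 0 = τ m * max (ν m - x) 0 := by
        rw [mul_max_of_nonneg _ _ hτm.le, mul_zero]
      rw [hmax]; ring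
    rw [Finset.sum_congr rfl e, ← Finset.sum_mul, mul_div_cancel_right₀ _ (two_ne_zero),
      Finset.sum_neg_distrib]
  have hdiff : Differentiable ℝ
      (fun v => (∑ m ∈ Finset.Icc 1 M, (max (τ m * (ν m - v)) 0) ^ 2) / 2) :=
    fun x => (hderiv x).differentiableAt
  -- subgradient inequality
  have hsub : ∀ χ v : ℝ,
      (∑ m ∈ Finset.Icc 1 M, (max (τ m * (ν m - χ)) 0) ^ 2) / 2 + (-(S χ)) * (v - χ) ≤
      (∑ m ∈ Finset.Icc 1 M, (max (τ m * (ν m - v)) 0) ^ 2) / 2 := by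
    intro χ v
    have key : ∀ m ∈ Finset.Icc 1 M,
        (max (τ m * (ν m - χ)) 0) ^ 2 + 2 * (τ m ^ 2 * max (ν m - χ) 0) * (χ - v) ≤
        (max (τ m * (ν m - v)) 0) ^ 2 := by
      intro m hm
      have hτm := hτ m hm
      have h := posPartSq_subgrad (τ m * (ν m - v)) (τ m * (ν m - χ))
      have hmax : max (τ m * (ν m - χ)) 0 = τ m * max (ν m - χ) 0 := by
        rw [mul_max_of_nonneg _ _ hτm.le, mul_zero]
      calc (max (τ m * (ν m - χ)) 0) ^ 2 + 2 * (τ m ^ 2 * max (ν m - χ) 0) * (χ - v)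
          = (max (τ m * (ν m - χ)) 0) ^ 2 +
            2 * max (τ m * (ν m - χ)) 0 * (τ m * (ν m - v) - τ m * (ν m - χ)) := by
            rw [hmax]; ring
        _ ≤ (max (τ m * (ν m - v)) 0) ^ 2 := h
    have hsumle := Finset.sum_le_sum key
    rw [Finset.sum_add_distrib, ← Finset.sum_mul] at hsumle
    have hsq : ∑ m ∈ Finset.Icc 1 M, 2 * (τ m ^ 2 * max (ν m - χ) 0) = 2 * S χ := by
      rw [hS]; rw [Finset.mul_sum]
    rw [hsq] at hsumle
    nlinarith [hsumle]
  refine ⟨hdiff, ?_, ?_⟩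
  · -- convexity from subgradient inequality
    refine ⟨convex_univ, ?_⟩
    intro x _ y _ a b ha hb hab
    have h1 := hsub (a * x + b * y) x
    have h2 := hsub (a * x + b * y) y
    have H := add_le_add (mul_le_mul_of_nonneg_left h1 ha) (mul_le_mul_of_nonneg_left h2 hb)
    have e : a * ((∑ m ∈ Finset.Icc 1 M, (max (τ m * (ν m - (a * x + b * y))) 0) ^ 2) / 2 +
          (-(S (a * x + b * y))) * (x - (a * x + b * y))) +
        b * ((∑ m ∈ Finset.Icc 1 M, (max (τ m * (ν m - (a * x + b * y))) 0) ^ 2) / 2 +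
          (-(S (a * x + b * y))) * (y - (a * x + b * y))) =
        (∑ m ∈ Finset.Icc 1 M, (max (τ m * (ν m - (a * x + b * y))) 0) ^ 2) / 2 := by
      linear_combination ((∑ m ∈ Finset.Icc 1 M, (max (τ m * (ν m - (a * x + b * y))) 0) ^ 2) / 2
        + S (a * x + b * y) * (a * x + b * y)) * hab
    rw [e] at H
    simp only [smul_eq_mul]
    exact H
  · intro ζ χ
    -- sum identity lemma
    have sumId : ∀ mbar : ℕ, 1 ≤ mbar → mbar ≤ M + 1 →
        (∀ m, 1 ≤ m → m ≤ M → m < mbar → ν m < χ) →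
        (∀ m, mbar ≤ m → m ≤ M → χ ≤ ν m) →
        ∑ m ∈ Finset.Icc mbar M, τ m ^ 2 * (χ - ν m) = -(S χ) := by
      intro mbar h1 h2 hlt hge
      have hsplit : (∑ m ∈ Finset.Ioc 0 (mbar - 1), τ m ^ 2 * max (ν m - χ) 0) +
          (∑ m ∈ Finset.Ioc (mbar - 1) M, τ m ^ 2 * max (ν m - χ) 0) =
          ∑ m ∈ Finset.Ioc 0 M, τ m ^ 2 * max (ν m - χ) 0 :=
        Finset.sum_Ioc_consecutive _ (Nat.zero_le _) (by omega)
      have e1 : Finset.Icc 1 M = Finset.Ioc 0 M := Finset.Icc_add_one_left_eq_Ioc 0 M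
      have e2 : Finset.Icc mbar M = Finset.Ioc (mbar - 1) M := by
        rw [← Finset.Icc_add_one_left_eq_Ioc]; congr 1; omega
      have hz : ∑ m ∈ Finset.Ioc 0 (mbar - 1), τ m ^ 2 * max (ν m - χ) 0 = 0 := by
        apply Finset.sum_eq_zero
        intro m hm
        simp only [Finset.mem_Ioc] at hm
        have : ν m < χ := hlt m hm.1 (by omega) (by omega)
        rw [max_eq_right (by linarith), mul_zero]
      have hr : ∑ m ∈ Finset.Ioc (mbar - 1) M, τ m ^ 2 * max (ν m - χ) 0 =
          ∑ m ∈ Finset.Ioc (mbar - 1) M, -(τ m ^ 2 * (χ - ν m)) := by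
        apply Finset.sum_congr rfl
        intro m hm
        simp only [Finset.mem_Ioc] at hm
        have : χ ≤ ν m := hge m (by omega) hm.2
        rw [max_eq_left (by linarith)]; ring
      rw [hS]
      simp only
      rw [e1, ← hsplit, hz, zero_add, hr, e2, Finset.sum_neg_distrib, neg_neg]
    constructor
    · -- minimizer ⇒ exists unique m̄
      intro hmin
      have hF : HasDerivAt (fun v => (v - ζ) ^ 2 / 2 +
          (∑ m ∈ Finset.Icc 1 M, (max (τ m * (ν m - v)) 0) ^ 2) / 2)
          ((χ - ζ) + (-(S χ))) χ := by
        have h1 : HasDerivAt (fun v : ℝ => (v - ζ) ^ 2 / 2) (χ - ζ) χ := by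
          have h0 : HasDerivAt (fun v : ℝ => v - ζ) 1 χ := by
            simpa using (hasDerivAt_id χ).sub_const ζ
          have := (h0.pow 2).div_const 2
          simpa using this
        exact h1.add (hderiv χ)
      have hlocal : IsLocalMin (fun v => (v - ζ) ^ 2 / 2 +
          (∑ m ∈ Finset.Icc 1 M, (max (τ m * (ν m - v)) 0) ^ 2) / 2) χ :=
        Filter.Eventually.of_forall hmin
      have hzero := hlocal.hasDerivAt_eq_zero hF
      have hkey : ζ - χ = -(S χ) := by linarith
      by_cases hex : ∃ m, (1 ≤ m ∧ m ≤ M) ∧ χ ≤ ν m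
      · set mbar := Nat.find hex with hmb
        obtain ⟨⟨hmb1, hmbM⟩, hχν⟩ := Nat.find_spec hex
        have hlt : ∀ m, 1 ≤ m → m ≤ M → m < mbar → ν m < χ := by
          intro m h1 h2 h3
          by_contra h
          exact Nat.find_min hex h3 ⟨⟨h1, h2⟩, not_lt.mp h⟩
        have hge : ∀ m, mbar ≤ m → m ≤ M → χ ≤ ν m := by
          intro m hm hmM
          exact le_trans hχν (hmono mbar m hmb1 hm hmM)
        refine ⟨mbar, ⟨Finset.mem_Icc.mpr ⟨hmb1, by omega⟩, ?_, Or.inr hχν,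
          by rw [sumId mbar hmb1 (by omega) hlt hge]; exact hkey⟩, ?_⟩
        · rcases Nat.eq_or_lt_of_le hmb1 with h | h
          · exact Or.inl h.symm
          · exact Or.inr (hlt (mbar - 1) (by omega) (by omega) (by omega))
        · intro m' ⟨hm'I, hm'l, hm'r, _⟩
          simp only [Finset.mem_Icc] at hm'I
          by_contra hne
          rcases Nat.lt_or_ge m' mbar with h | h
          · have hm'M : m' ≤ M := by omega
            rcases hm'r with h' | h'
            · omega
            · exact absurd h' (not_le.mpr (hlt m' hm'I.1 hm'M h))
          · have hlt' : mbar < m' := by omega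
            rcases hm'l with h' | h'
            · omega
            · have : χ ≤ ν (m' - 1) :=
                le_trans hχν (hmono mbar (m' - 1) hmb1 (by omega) (by omega))
              linarith
      · push_neg at hex
        have hlt : ∀ m, 1 ≤ m → m ≤ M → m < M + 1 → ν m < χ := fun m h1 h2 _ =>
          hex m ⟨h1, h2⟩
        have hge : ∀ m, M + 1 ≤ m → m ≤ M → χ ≤ ν m := fun m hm hmM => by omega
        refine ⟨M + 1, ⟨Finset.mem_Icc.mpr ⟨by omega, le_refl _⟩,
          Or.inr (by simpa using hlt M hM (le_refl _) (by omega)), Or.inl rfl,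
          by rw [sumId (M + 1) (by omega) (by omega) hlt hge]; exact hkey⟩, ?_⟩
        intro m' ⟨hm'I, hm'l, hm'r, _⟩
        simp only [Finset.mem_Icc] at hm'I
        by_contra hne
        have hm'M : m' ≤ M := by omega
        rcases hm'r with h' | h'
        · omega
        · exact absurd h' (not_le.mpr (hlt m' hm'I.1 hm'M (by omega)))
    · -- exists m̄ ⇒ minimizer
      rintro ⟨mbar, ⟨hmI, hml, hmr, hsum⟩, _⟩
      simp only [Finset.mem_Icc] at hmI
      have hlt : ∀ m, 1 ≤ m → m ≤ M → m < mbar → ν m < χ := by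
        intro m h1 h2 h3
        have hmb2 : 2 ≤ mbar := by omega
        rcases hml with h | h
        · omega
        · exact lt_of_le_of_lt (hmono m (mbar - 1) h1 (by omega) (by omega)) h
      have hge : ∀ m, mbar ≤ m → m ≤ M → χ ≤ ν m := by
        intro m hm hmM
        rcases hmr with h | h
        · omega
        · exact le_trans h (hmono mbar m hmI.1 hm hmM)
      have hkey : ζ - χ = -(S χ) := by
        rw [hsum, sumId mbar hmI.1 hmI.2 hlt hge]
      intro v
      have h := hsub χ v
      have h3 : (ζ - χ) * (v - χ) = (-(S χ)) * (v - χ) := by rw [hkey]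
      simp only
      nlinarith [h, h3, sq_nonneg (v - χ)]
end
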